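/- arXiv:1803.06243 — 3 statements merged into one kernel-verified Lean document; each statement's English description precedes it below -/
import Mathlib

section
/- Let A ⊂ X be nonempty and let f : X → ℝ be Lipschitz continuous on a neighborhood of A. Then for every pair (ã, h̃) with ã ∈ ∂f(A), ‖h̃‖ ≤ 1, ‖ã‖ = min_{a ∈ ∂f(A)} ‖a‖, and f⁰(A;h̃) = min_{‖h‖≤1} f⁰(A;h), one has −‖ã‖ = ⟨ã, h̃⟩ = f⁰(A;h̃). -/
open Filter Metric Set NormedSpace
open scoped NNReal Topology

variable {X : Type*} [NormedAddCommGroup X] [NormedSpace ℝ X]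

/-- Clarke's generalized directional derivative
`f⁰(x;h) = limsup_{y→x, t↓0⁺} (f(y+th) − f(y))/t`. -/
noncomputable def clarkeDeriv (f : X → ℝ) (x : X) (h : X) : ℝ :=
  Filter.limsup (fun p : X × ℝ => (f (p.1 + p.2 • h) - f p.1) / p.2)
    ((nhds x) ×ˢ (nhdsWithin 0 (Set.Ioi 0)))

/-- Clarke's generalized gradient `∂f(x) = {a ∈ X* : ⟨a,h⟩ ≤ f⁰(x;h) ∀ h}`. -/
def clarkeGrad (f : X → ℝ) (x : X) : Set (StrongDual ℝ X) :=
  {a | ∀ h : X, a h ≤ clarkeDeriv f x h}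

/-- Directional derivative of `f` on the set `A`: `f⁰(A;h) = sup_{y∈A} f⁰(y;h)`. -/
noncomputable def setDeriv (f : X → ℝ) (A : Set X) (h : X) : ℝ :=
  sSup ((fun y => clarkeDeriv f y h) '' A)

/-- Gradient of `f` on the set `A`: the weak*-closed convex hull of `⋃_{y∈A} ∂f(y)`. -/
def setGrad (f : X → ℝ) (A : Set X) : Set (StrongDual ℝ X) :=
  {a | StrongDual.toWeakDual a ∈
    closure ((StrongDual.toWeakDual (𝕜 := ℝ) (E := X)) '' (convexHull ℝ (⋃ y ∈ A, clarkeGrad f y)))}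

/-! ### Auxiliary material -/

/-- The difference quotient appearing in the Clarke derivative. -/
noncomputable def dq (f : X → ℝ) (h : X) (p : X × ℝ) : ℝ :=
  (f (p.1 + p.2 • h) - f p.1) / p.2

lemma clarkeDeriv_eq (f : X → ℝ) (y h : X) :
    clarkeDeriv f y h = Filter.limsup (dq f h) ((𝓝 y) ×ˢ (𝓝[>] (0:ℝ))) := rfl

section PerPoint

variable {f : X → ℝ} {L : ℝ≥0} {y : X} {ε : ℝ}

lemma dq_bound (hε : 0 < ε) (hLip : LipschitzOnWith L f (ball y ε)) (h : X) :
    ∀ᶠ p in ((𝓝 y) ×ˢ (𝓝[>] (0:ℝ))), |dq f h p| ≤ L * ‖h‖ := by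
  have hτ : (0:ℝ) < ε / (2 * (‖h‖ + 1)) := by positivity
  filter_upwards [Filter.prod_mem_prod (ball_mem_nhds y (half_pos hε))
    (Ioo_mem_nhdsGT_of_mem ⟨le_refl (0:ℝ), hτ⟩)] with p hp
  have hp1 : p.1 ∈ ball y (ε/2) := hp.1
  have hp2 : 0 < p.2 := hp.2.1
  have hp2' : p.2 < ε / (2 * (‖h‖ + 1)) := hp.2.2
  have hmem1 : p.1 ∈ ball y ε := by
    have := mem_ball.1 hp1
    exact mem_ball.2 (lt_of_lt_of_le this (by linarith))
  have hsmall : p.2 * ‖h‖ < ε / 2 := by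
    have h1 : p.2 * ‖h‖ ≤ p.2 * (‖h‖ + 1) := by nlinarith [norm_nonneg h, hp2.le]
    have h2 : p.2 * (‖h‖ + 1) < ε / (2 * (‖h‖ + 1)) * (‖h‖ + 1) := by
      apply mul_lt_mul_of_pos_right hp2'; positivity
    have h3 : ε / (2 * (‖h‖ + 1)) * (‖h‖ + 1) = ε / 2 := by
      field_simp
    linarith
  have hmem2 : p.1 + p.2 • h ∈ ball y ε := by
    have htri : dist (p.1 + p.2 • h) y ≤ dist p.1 y + ‖p.2 • h‖ := by
      calc dist (p.1 + p.2 • h) y ≤ dist (p.1 + p.2 • h) p.1 + dist p.1 y := dist_triangle _ _ _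
      _ = ‖p.2 • h‖ + dist p.1 y := by rw [dist_eq_norm]; simp
      _ = dist p.1 y + ‖p.2 • h‖ := by ring
    have hn : ‖p.2 • h‖ = p.2 * ‖h‖ := by
      rw [norm_smul, Real.norm_eq_abs, abs_of_pos hp2]
    rw [hn] at htri
    have hb := mem_ball.1 hp1
    exact mem_ball.2 (by linarith)
  have hd : dist (f (p.1 + p.2 • h)) (f p.1) ≤ (L:ℝ) * dist (p.1 + p.2 • h) p.1 :=
    hLip.dist_le_mul _ hmem2 _ hmem1
  have hdd : dist (p.1 + p.2 • h) p.1 = p.2 * ‖h‖ := by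
    rw [dist_eq_norm]
    simp [norm_smul, Real.norm_eq_abs, abs_of_pos hp2]
  rw [hdd, Real.dist_eq] at hd
  have : |dq f h p| = |f (p.1 + p.2 • h) - f p.1| / p.2 := by
    rw [dq, abs_div, abs_of_pos hp2]
  rw [this]
  rw [div_le_iff₀ hp2]
  calc |f (p.1 + p.2 • h) - f p.1| ≤ (L:ℝ) * (p.2 * ‖h‖) := hd
  _ = (L:ℝ) * ‖h‖ * p.2 := by ring

lemma dq_isBoundedUnder (hε : 0 < ε) (hLip : LipschitzOnWith L f (ball y ε)) (h : X) :
    IsBoundedUnder (· ≤ ·) ((𝓝 y) ×ˢ (𝓝[>] (0:ℝ))) (dq f h) :=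
  ⟨(L:ℝ) * ‖h‖, eventually_map.2 ((dq_bound hε hLip h).mono fun _ hp => (abs_le.1 hp).2)⟩

lemma dq_isBoundedUnder_ge (hε : 0 < ε) (hLip : LipschitzOnWith L f (ball y ε)) (h : X) :
    IsBoundedUnder (· ≥ ·) ((𝓝 y) ×ˢ (𝓝[>] (0:ℝ))) (dq f h) :=
  ⟨-((L:ℝ) * ‖h‖), eventually_map.2 ((dq_bound hε hLip h).mono fun _ hp => (abs_le.1 hp).1)⟩

lemma clarkeDeriv_le_mul (hε : 0 < ε) (hLip : LipschitzOnWith L f (ball y ε)) (h : X) :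
    clarkeDeriv f y h ≤ L * ‖h‖ := by
  rw [clarkeDeriv_eq]
  exact Filter.limsup_le_of_le ((dq_isBoundedUnder_ge hε hLip h).isCoboundedUnder_le)
    ((dq_bound hε hLip h).mono fun _ hp => (abs_le.1 hp).2)

lemma neg_mul_le_clarkeDeriv (hε : 0 < ε) (hLip : LipschitzOnWith L f (ball y ε)) (h : X) :
    -((L:ℝ) * ‖h‖) ≤ clarkeDeriv f y h := by
  rw [clarkeDeriv_eq]
  exact Filter.le_limsup_of_frequently_le
    (((dq_bound hε hLip h).mono fun _ hp => (abs_le.1 hp).1).frequently)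
    (dq_isBoundedUnder hε hLip h)

lemma clarkeDeriv_zero_dir (f : X → ℝ) (y : X) : clarkeDeriv f y 0 = 0 := by
  rw [clarkeDeriv_eq]
  have : dq f (0:X) = fun _ => (0:ℝ) := by
    funext p; simp [dq]
  rw [this]
  exact limsup_const 0

end PerPoint
section PerPoint2

variable {f : X → ℝ} {L : ℝ≥0} {y : X} {ε : ℝ}

lemma limsup_comp_eq {α β : Type*} (u : β → ℝ) (ψ : α → β) (F : Filter α) :
    Filter.limsup (fun p => u (ψ p)) F = Filter.limsup u (Filter.map ψ F) := by
  rw [Filter.limsup, Filter.limsup, Filter.map_map]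
  rfl

lemma map_mul_left_nhdsWithin_Ioi {c : ℝ} (hc : 0 < c) :
    Filter.map (fun t : ℝ => c * t) (𝓝[>] (0:ℝ)) = 𝓝[>] (0:ℝ) := by
  have h1 := (Homeomorph.mulLeft₀ c hc.ne').isEmbedding.map_nhdsWithin_eq (Set.Ioi 0) 0
  have h2 : ⇑(Homeomorph.mulLeft₀ c hc.ne') = (fun t : ℝ => c * t) := rfl
  rw [h2] at h1
  have h3 : (fun t : ℝ => c * t) '' (Set.Ioi 0) = Set.Ioi 0 := by
    ext t
    constructor
    · rintro ⟨s, hs, rfl⟩; exact mul_pos hc hs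
    · intro ht; exact ⟨t / c, div_pos ht hc, by field_simp⟩
  simpa [h3] using h1

lemma map_psi_eq {c : ℝ} (hc : 0 < c) :
    Filter.map (fun p : X × ℝ => (p.1, c * p.2)) ((𝓝 y) ×ˢ (𝓝[>] (0:ℝ)))
      = (𝓝 y) ×ˢ (𝓝[>] (0:ℝ)) := by
  have : (fun p : X × ℝ => (p.1, c * p.2)) = Prod.map id (fun t : ℝ => c * t) := rfl
  rw [this, ← Filter.prod_map_map_eq', Filter.map_id, map_mul_left_nhdsWithin_Ioi hc]

lemma clarkeDeriv_smul_pos (hε : 0 < ε) (hLip : LipschitzOnWith L f (ball y ε))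
    (h : X) {c : ℝ} (hc : 0 < c) :
    clarkeDeriv f y (c • h) = c * clarkeDeriv f y h := by
  set F := (𝓝 y) ×ˢ (𝓝[>] (0:ℝ)) with hF
  set ψ : X × ℝ → X × ℝ := fun p => (p.1, c * p.2) with hψdef
  have hmap : Filter.map ψ F = F := map_psi_eq hc
  have hψt : Filter.Tendsto ψ F F := le_of_eq hmap
  have hfun : dq f (c • h) = fun p => c * dq f h (ψ p) := by
    funext p
    simp only [dq, hψdef]
    rcases eq_or_ne p.2 0 with h0 | h0
    · simp [h0]
    · have : p.2 • (c • h) = (c * p.2) • h := by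
        rw [smul_smul, mul_comm]
      rw [this, eq_comm, mul_comm c (_ / _), div_mul_eq_mul_div, div_eq_div_iff (mul_ne_zero hc.ne' h0) h0]
      ring
  -- boundedness facts
  have hb : ∀ᶠ p in F, |dq f h (ψ p)| ≤ (L:ℝ) * ‖h‖ := hψt.eventually (dq_bound hε hLip h)
  have hbu : IsBoundedUnder (· ≤ ·) F (fun p => dq f h (ψ p)) :=
    ⟨(L:ℝ) * ‖h‖, eventually_map.2 (hb.mono fun _ hp => (abs_le.1 hp).2)⟩
  have hbl : IsBoundedUnder (· ≥ ·) F (fun p => dq f h (ψ p)) :=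
    ⟨-((L:ℝ) * ‖h‖), eventually_map.2 (hb.mono fun _ hp => (abs_le.1 hp).1)⟩
  have hgu : IsBoundedUnder (· ≤ ·) F (fun p => c * dq f h (ψ p)) :=
    ⟨c * ((L:ℝ) * ‖h‖), eventually_map.2 (hb.mono fun _ hp =>
      by nlinarith [(abs_le.1 hp).2, (abs_le.1 hp).1] )⟩
  have hgl : IsBoundedUnder (· ≥ ·) F (fun p => c * dq f h (ψ p)) :=
    ⟨-(c * ((L:ℝ) * ‖h‖)), eventually_map.2 (hb.mono fun _ hp =>
      by nlinarith [(abs_le.1 hp).2, (abs_le.1 hp).1] )⟩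
  have hiso := (OrderIso.mulLeft₀ c hc).limsup_apply (u := fun p => dq f h (ψ p)) (f := F)
    hbu hbl.isCoboundedUnder_le hgu hgl.isCoboundedUnder_le
  have hiso' : c * Filter.limsup (fun p => dq f h (ψ p)) F
      = Filter.limsup (fun p => c * dq f h (ψ p)) F := hiso
  rw [clarkeDeriv_eq, clarkeDeriv_eq, hfun, ← hF, ← hiso']
  congr 1
  rw [limsup_comp_eq (dq f h) ψ F, hmap]

lemma clarkeDeriv_add_le (hε : 0 < ε) (hLip : LipschitzOnWith L f (ball y ε)) (h k : X) :
    clarkeDeriv f y (h + k) ≤ clarkeDeriv f y h + clarkeDeriv f y k := by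
  set F := (𝓝 y) ×ˢ (𝓝[>] (0:ℝ)) with hF
  set ψ : X × ℝ → X × ℝ := fun p => (p.1 + p.2 • k, p.2) with hψdef
  have hψt : Filter.Tendsto ψ F F := by
    apply Filter.Tendsto.prodMk
    · have h1 : Filter.Tendsto (fun p : X × ℝ => p.1) F (𝓝 y) := tendsto_fst
      have h2 : Filter.Tendsto (fun p : X × ℝ => p.2 • k) F (𝓝 (0:X)) := by
        have : Filter.Tendsto (fun p : X × ℝ => p.2) F (𝓝 (0:ℝ)) :=
          tendsto_snd.mono_right nhdsWithin_le_nhds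
        simpa using this.smul_const k
      simpa using h1.add h2
    · exact tendsto_snd
  have hsplit : ∀ p : X × ℝ, dq f (h + k) p = dq f h (ψ p) + dq f k p := by
    intro p
    simp only [dq, hψdef]
    rw [← add_div, sub_add_sub_cancel]
    congr 2
    rw [smul_add]
    abel
  have hbh : ∀ᶠ p in F, |dq f h (ψ p)| ≤ (L:ℝ) * ‖h‖ := hψt.eventually (dq_bound hε hLip h)
  have hbk : ∀ᶠ p in F, |dq f k p| ≤ (L:ℝ) * ‖k‖ := dq_bound hε hLip k
  have h1 : Filter.limsup (fun p => dq f h (ψ p)) F ≤ clarkeDeriv f y h := by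
    rw [limsup_comp_eq (dq f h) ψ F, clarkeDeriv_eq]
    refine Filter.limsup_le_limsup_of_le hψt ?_ (dq_isBoundedUnder hε hLip h)
    exact IsBoundedUnder.isCoboundedUnder_le
      ⟨-((L:ℝ) * ‖h‖), eventually_map.2 ((eventually_map.2 hbh).mono fun _ hp => (abs_le.1 hp).1)⟩
  -- ε/2 argument for sum
  have hbu1 : IsBoundedUnder (· ≤ ·) F (fun p => dq f h (ψ p)) :=
    ⟨(L:ℝ) * ‖h‖, eventually_map.2 (hbh.mono fun _ hp => (abs_le.1 hp).2)⟩
  have hbu2 : IsBoundedUnder (· ≤ ·) F (dq f k) :=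
    ⟨(L:ℝ) * ‖k‖, eventually_map.2 (hbk.mono fun _ hp => (abs_le.1 hp).2)⟩
  have key : Filter.limsup (fun p => dq f h (ψ p) + dq f k p) F
      ≤ Filter.limsup (fun p => dq f h (ψ p)) F + Filter.limsup (dq f k) F := by
    refine le_of_forall_pos_le_add fun δ hδ => ?_
    have e1 : ∀ᶠ p in F, dq f h (ψ p) < Filter.limsup (fun p => dq f h (ψ p)) F + δ/2 :=
      Filter.eventually_lt_of_limsup_lt (by linarith) hbu1
    have e2 : ∀ᶠ p in F, dq f k p < Filter.limsup (dq f k) F + δ/2 :=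
      Filter.eventually_lt_of_limsup_lt (by linarith) hbu2
    refine Filter.limsup_le_of_le ?_ ?_
    · exact IsBoundedUnder.isCoboundedUnder_le
        ⟨-((L:ℝ) * ‖h‖) + -((L:ℝ) * ‖k‖), eventually_map.2
          ((hbh.and hbk).mono fun _ hp =>
            add_le_add (abs_le.1 hp.1).1 (abs_le.1 hp.2).1)⟩
    · filter_upwards [e1, e2] with p hp1 hp2
      linarith
  calc clarkeDeriv f y (h + k)
      = Filter.limsup (fun p => dq f h (ψ p) + dq f k p) F := by
        rw [clarkeDeriv_eq]; exact Filter.limsup_congr (Eventually.of_forall hsplit)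
    _ ≤ Filter.limsup (fun p => dq f h (ψ p)) F + Filter.limsup (dq f k) F := key
    _ ≤ clarkeDeriv f y h + clarkeDeriv f y k := by
        rw [clarkeDeriv_eq (f := f) (y := y) (h := k)]
        exact add_le_add h1 le_rfl

end PerPoint2
section HB

variable {f : X → ℝ} {L : ℝ≥0} {y : X} {ε : ℝ}

lemma exists_clarkeGrad_eq (hε : 0 < ε) (hLip : LipschitzOnWith L f (ball y ε))
    {h₀ : X} (hne : h₀ ≠ 0) :
    ∃ g : StrongDual ℝ X, g ∈ clarkeGrad f y ∧ g h₀ = clarkeDeriv f y h₀ := by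
  set N : X → ℝ := clarkeDeriv f y with hN
  have N_hom : ∀ c : ℝ, 0 < c → ∀ x, N (c • x) = c * N x :=
    fun c hc x => clarkeDeriv_smul_pos hε hLip x hc
  have N_add : ∀ x z : X, N (x + z) ≤ N x + N z :=
    fun x z => clarkeDeriv_add_le hε hLip x z
  have N0 : N 0 = 0 := clarkeDeriv_zero_dir f y
  have Nle : ∀ x, N x ≤ (L:ℝ) * ‖x‖ := fun x => clarkeDeriv_le_mul hε hLip x
  have Nsym : ∀ x, 0 ≤ N x + N (-x) := by
    intro x
    have := N_add x (-x)
    rw [add_neg_cancel, N0] at this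
    linarith
  set pm : X →ₗ.[ℝ] ℝ := LinearPMap.mkSpanSingleton h₀ (N h₀) hne with hpm
  have hfle : ∀ x : pm.domain, pm x ≤ N x := by
    rintro ⟨x, hx⟩
    have hx' : x ∈ Submodule.span ℝ {h₀} := hx
    obtain ⟨t, rfl⟩ := Submodule.mem_span_singleton.1 hx'
    have happ : pm ⟨t • h₀, hx⟩ = t • N h₀ := LinearPMap.mkSpanSingleton'_apply _ _ _ t _
    rw [happ]
    rcases lt_trichotomy t 0 with ht | rfl | ht
    · have h1 : N (t • h₀) = (-t) * N (-h₀) := by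
        have : t • h₀ = (-t) • (-h₀) := by rw [neg_smul, smul_neg, neg_neg]
        rw [this, N_hom (-t) (by linarith) (-h₀)]
      rw [h1, smul_eq_mul]
      nlinarith [Nsym h₀]
    · simp [N0]
    · rw [N_hom t ht h₀, smul_eq_mul]
  obtain ⟨g, hg1, hg2⟩ := exists_extension_of_le_sublinear pm N N_hom N_add hfle
  have hgh₀ : g h₀ = N h₀ := by
    have hmem : h₀ ∈ pm.domain := Submodule.mem_span_singleton_self h₀
    have := hg1 ⟨h₀, hmem⟩
    rw [this]
    exact LinearPMap.mkSpanSingleton_apply ℝ ℝ hne (N h₀)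
  have hbound : ∀ x, ‖g x‖ ≤ (L:ℝ) * ‖x‖ := by
    intro x
    rw [Real.norm_eq_abs, abs_le]
    constructor
    · have := (hg2 (-x)).trans (Nle (-x))
      rw [map_neg, norm_neg] at this
      linarith
    · exact (hg2 x).trans (Nle x)
  refine ⟨LinearMap.mkContinuous g ((L:ℝ)) hbound, fun k => ?_, ?_⟩
  · exact hg2 k
  · exact hgh₀

end HB
section WeakDualEval

/-- Evaluation at a point, as a linear functional on the weak-* dual. -/
noncomputable def evalLM (z : X) : WeakDual ℝ X →ₗ[ℝ] ℝ where
  toFun := fun ℓ => ℓ z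
  map_add' := fun ℓ₁ ℓ₂ => rfl
  map_smul' := fun c ℓ => rfl

lemma weakDual_dual_eval (F : WeakDual ℝ X →L[ℝ] ℝ) :
    ∃ x : X, ∀ ℓ : WeakDual ℝ X, F ℓ = ℓ x := by
  classical
  have hc : F ⁻¹' (Set.Ioo (-1:ℝ) 1) ∈ 𝓝 (0 : WeakDual ℝ X) := by
    have h0 : Set.Ioo (-1:ℝ) 1 ∈ 𝓝 (F 0) := by
      rw [map_zero]; exact Ioo_mem_nhds (by norm_num) (by norm_num)
    exact F.continuous.continuousAt.preimage_mem_nhds h0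
  have hn : 𝓝 (0 : WeakDual ℝ X)
      = Filter.comap (fun (ℓ : WeakDual ℝ X) (z : X) => ℓ z) (𝓝 (fun z : X => (0:ℝ))) := by
    exact nhds_induced _ _
  rw [hn, Filter.mem_comap] at hc
  obtain ⟨t, ht, hsub⟩ := hc
  rw [nhds_pi, Filter.mem_pi] at ht
  obtain ⟨I, hIfin, V, hV, hVsub⟩ := ht
  have key : ∀ ℓ : WeakDual ℝ X, (∀ i ∈ I, ℓ i = 0) → F ℓ = 0 := by
    intro ℓ hℓ
    by_contra hne
    have hval : ∀ s : ℝ, F (s • ℓ) ∈ Set.Ioo (-1:ℝ) 1 := by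
      intro s
      apply hsub
      show (fun z : X => (s • ℓ) z) ∈ t
      apply hVsub
      intro i hi
      have hzero : (s • ℓ) i = 0 := by
        have hrw : (s • ℓ) i = s * ℓ i := rfl
        rw [hrw, hℓ i hi, mul_zero]
      show (s • ℓ) i ∈ V i
      rw [hzero]
      exact mem_of_mem_nhds (hV i)
    have h2 := (hval (2 * (F ℓ)⁻¹)).2
    rw [map_smul, smul_eq_mul, mul_assoc, inv_mul_cancel₀ hne, mul_one] at h2
    norm_num at h2
  haveI : Finite ↥I := hIfin.to_subtype
  have hker : ⨅ (i : I), LinearMap.ker (evalLM (i : X)) ≤ LinearMap.ker (F : WeakDual ℝ X →ₗ[ℝ] ℝ) := by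
    intro ℓ hℓ
    rw [Submodule.mem_iInf] at hℓ
    rw [LinearMap.mem_ker]
    exact key ℓ fun i hi => hℓ ⟨i, hi⟩
  have hspan := mem_span_of_iInf_ker_le_ker hker
  haveI := hIfin.fintype
  obtain ⟨c, hc⟩ := (Submodule.mem_span_range_iff_exists_fun ℝ).1 hspan
  refine ⟨∑ i : I, c i • (i : X), fun ℓ => ?_⟩
  have happ := congrArg (fun (G : WeakDual ℝ X →ₗ[ℝ] ℝ) => G ℓ) hc
  simp only [LinearMap.coe_sum, Finset.sum_apply, LinearMap.smul_apply, smul_eq_mul] at happ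
  have hF : F ℓ = ∑ i : I, c i * (evalLM (i : X)) ℓ := happ.symm
  rw [hF, map_sum]
  congr 1
  funext i
  rw [map_smul, smul_eq_mul]
  rfl

end WeakDualEval
/-- Proposition 3.1(2): for every pair `(ã, h̃)` with `ã` of minimal norm in `∂f(A)` and
`h̃` minimizing `f⁰(A;·)` over the unit ball, one has `−‖ã‖ = ⟨ã,h̃⟩ = f⁰(A;h̃)`. -/
theorem minimal_pair_identity
    [CompleteSpace X] (A : Set X) (hA : A.Nonempty) (f : X → ℝ)
    (hf : ∃ (L : ℝ≥0) (U : Set X), IsOpen U ∧ A ⊆ U ∧ LipschitzOnWith L f U)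
    (a : StrongDual ℝ X) (ha : a ∈ setGrad f A) (hmin : ∀ b ∈ setGrad f A, ‖a‖ ≤ ‖b‖)
    (h : X) (hh : ‖h‖ ≤ 1)
    (hopt : ∀ h' : X, ‖h'‖ ≤ 1 → setDeriv f A h ≤ setDeriv f A h') :
    -‖a‖ = a h ∧ a h = setDeriv f A h := by
  classical
  obtain ⟨L, U, hU, hAU, hLip⟩ := hf
  have hball : ∀ y ∈ A, ∃ ε : ℝ, 0 < ε ∧ LipschitzOnWith L f (ball y ε) := by
    intro y hy
    obtain ⟨ε, hε, hb⟩ := Metric.isOpen_iff.1 hU y (hAU hy)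
    exact ⟨ε, hε, hLip.mono hb⟩
  set S : Set (StrongDual ℝ X) := ⋃ y ∈ A, clarkeGrad f y with hS
  set p : X → ℝ := setDeriv f A with hp
  have himg_ne : ∀ k : X, ((fun y => clarkeDeriv f y k) '' A).Nonempty := fun k => hA.image _
  have himg_bdd : ∀ k : X, BddAbove ((fun y => clarkeDeriv f y k) '' A) := by
    intro k
    refine ⟨(L:ℝ) * ‖k‖, ?_⟩
    rintro _ ⟨y, hy, rfl⟩
    obtain ⟨ε, hε, hL⟩ := hball y hy
    exact clarkeDeriv_le_mul hε hL k
  have hle_p : ∀ y ∈ A, ∀ k, clarkeDeriv f y k ≤ p k := fun y hy k =>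
    le_csSup (himg_bdd k) ⟨y, hy, rfl⟩
  have hp0 : p 0 = 0 := by
    have himg : (fun y => clarkeDeriv f y 0) '' A = {0} := by
      apply Set.eq_singleton_iff_nonempty_unique_mem.2
      exact ⟨himg_ne 0, by rintro _ ⟨y, hy, rfl⟩; exact clarkeDeriv_zero_dir f y⟩
    show sSup ((fun y => clarkeDeriv f y 0) '' A) = 0
    rw [himg, csSup_singleton]
  -- every element of setGrad is dominated by p
  have hdom : ∀ b ∈ setGrad f A, ∀ k, b k ≤ p k := by
    intro b hb k
    have hTclosed : IsClosed {w : WeakDual ℝ X | w k ≤ p k} :=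
      IsClosed.preimage (WeakDual.eval_continuous k) isClosed_Iic
    have hsub : (StrongDual.toWeakDual (𝕜 := ℝ) (E := X)) '' (convexHull ℝ S)
        ⊆ {w : WeakDual ℝ X | w k ≤ p k} := by
      rintro _ ⟨b', hb', rfl⟩
      have hhalf : Convex ℝ {b'' : StrongDual ℝ X | b'' k ≤ p k} := by
        intro x hx y hy s t hs ht hst
        simp only [Set.mem_setOf_eq] at *
        have hxy : (s • x + t • y) k = s * x k + t * y k := by simp
        rw [hxy]
        calc s * x k + t * y k ≤ s * p k + t * p k :=
              add_le_add (mul_le_mul_of_nonneg_left hx hs) (mul_le_mul_of_nonneg_left hy ht)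
        _ = p k := by rw [← add_mul, hst, one_mul]
      have hsub2 : convexHull ℝ S ⊆ {b'' : StrongDual ℝ X | b'' k ≤ p k} := by
        apply convexHull_min ?_ hhalf
        intro b'' hb''
        rw [hS, Set.mem_iUnion₂] at hb''
        obtain ⟨y, hy, hmem⟩ := hb''
        exact (hmem k).trans (hle_p y hy k)
      exact hsub2 hb'
    exact closure_minimal hsub hTclosed hb
  have hahp : a h ≤ p h := hdom a ha h
  have hnegnorm : -‖a‖ ≤ a h := by
    have h1 : |a h| ≤ ‖a‖ * ‖h‖ := by
      have := a.le_opNorm h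
      rwa [Real.norm_eq_abs] at this
    have h2 : ‖a‖ * ‖h‖ ≤ ‖a‖ := by nlinarith [norm_nonneg a]
    nlinarith [(abs_le.1 h1).1]
  have hkey : p h ≤ -‖a‖ := by
    by_contra hcon
    push_neg at hcon
    set r : ℝ := -(p h) with hr
    have hph0 : p h ≤ 0 := by
      have := hopt 0 (by simp)
      calc p h ≤ p 0 := this
      _ = 0 := hp0
    have hr0 : 0 ≤ r := by simp [hr]; linarith
    have hrnorm : r < ‖a‖ := by simp [hr]; linarith
    set Bs : Set (WeakDual ℝ X) := WeakDual.toStrongDual ⁻¹' Metric.closedBall 0 r with hBs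
    have hBconv : Convex ℝ Bs := by
      intro x hx y' hy' s t hs ht hst
      have hlin : WeakDual.toStrongDual (s • x + t • y')
          = s • WeakDual.toStrongDual x + t • WeakDual.toStrongDual y' := by
        simp
      show WeakDual.toStrongDual (s • x + t • y') ∈ Metric.closedBall 0 r
      rw [hlin]
      exact convex_closedBall (0 : StrongDual ℝ X) r hx hy' hs ht hst
    have hBcompact : IsCompact Bs := WeakDual.isCompact_closedBall 0 r
    have hKconv : Convex ℝ (closure ((StrongDual.toWeakDual (𝕜 := ℝ) (E := X)) '' (convexHull ℝ S))) := by
      have h1 := (convex_convexHull ℝ S).linear_image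
        (StrongDual.toWeakDual (𝕜 := ℝ) (E := X)).toLinearMap
      exact h1.closure
    have hdisj : Disjoint Bs (closure ((StrongDual.toWeakDual (𝕜 := ℝ) (E := X)) '' (convexHull ℝ S))) := by
      rw [Set.disjoint_left]
      intro w hw1 hw2
      have hmem : WeakDual.toStrongDual w ∈ setGrad f A := hw2
      have h1 : ‖WeakDual.toStrongDual w‖ ≤ r := by
        rwa [hBs, Set.mem_preimage, mem_closedBall_zero_iff] at hw1
      have := hmin _ hmem
      linarith
    haveI : LocallyConvexSpace ℝ (WeakDual ℝ X) := WeakBilin.locallyConvexSpace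
    obtain ⟨G, u, v, hGu, huv, hGv⟩ :=
      geometric_hahn_banach_compact_closed hBconv hBcompact hKconv isClosed_closure hdisj
    obtain ⟨h₀, hh₀⟩ := weakDual_dual_eval G
    have h00 : (0 : WeakDual ℝ X) ∈ Bs := by
      rw [hBs, Set.mem_preimage]
      simpa [mem_closedBall_zero_iff] using hr0
    have haK : StrongDual.toWeakDual a ∈ closure ((StrongDual.toWeakDual (𝕜 := ℝ) (E := X)) '' (convexHull ℝ S)) := ha
    have hne0 : h₀ ≠ 0 := by
      intro h0eq
      have h1 := hGu 0 h00
      have h2 := hGv _ haK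
      rw [hh₀ 0, h0eq] at h1
      rw [hh₀ _, h0eq] at h2
      simp only [map_zero] at h1 h2
      linarith
    set n : ℝ := ‖h₀‖ with hn
    have hnpos : 0 < n := norm_pos_iff.2 hne0
    set h₁ : X := n⁻¹ • h₀ with hh₁
    have hnorm1 : ‖h₁‖ = 1 := by
      rw [hh₁, norm_smul, norm_inv, Real.norm_eq_abs, abs_of_pos hnpos, ← hn]
      field_simp
    have hne1 : h₁ ≠ 0 := by
      intro hq
      rw [hq, norm_zero] at hnorm1
      norm_num at hnorm1
    obtain ⟨g₀, hg₀n, hg₀v⟩ := exists_dual_vector ℝ h₁ (norm_ne_zero_iff.2 hne1)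
    have hg₀v' : g₀ h₁ = 1 := by
      have : g₀ h₁ = ‖h₁‖ := by exact_mod_cast hg₀v
      rw [this, hnorm1]
    have hg₀h₀ : g₀ h₀ = n := by
      have h1 : g₀ h₁ = n⁻¹ * g₀ h₀ := by rw [hh₁, map_smul, smul_eq_mul]
      rw [hg₀v'] at h1
      field_simp at h1
      linarith
    have hrg : StrongDual.toWeakDual (r • g₀) ∈ Bs := by
      rw [hBs, Set.mem_preimage]
      have heq : WeakDual.toStrongDual (StrongDual.toWeakDual (r • g₀)) = r • g₀ := rfl
      rw [heq, mem_closedBall_zero_iff, norm_smul, hg₀n, Real.norm_eq_abs,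
        abs_of_nonneg hr0, mul_one]
    have hru : n * r < u := by
      have h1 := hGu _ hrg
      rw [hh₀] at h1
      have h2 : (StrongDual.toWeakDual (r • g₀)) h₀ = r * g₀ h₀ := rfl
      rw [h2, hg₀h₀] at h1
      linarith [h1]
    have hKbound : p (-h₁) ≤ -(n⁻¹ * v) := by
      by_contra hcb
      push_neg at hcb
      obtain ⟨z, hzmem, hzgt⟩ := exists_lt_of_lt_csSup (himg_ne (-h₁)) hcb
      obtain ⟨y, hy, rfl⟩ := hzmem
      obtain ⟨ε, hε, hL⟩ := hball y hy
      obtain ⟨g', hg'mem, hg'eq⟩ := exists_clarkeGrad_eq hε hL (neg_ne_zero.2 hne1)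
      have hg'K : StrongDual.toWeakDual g'
          ∈ closure ((StrongDual.toWeakDual (𝕜 := ℝ) (E := X)) '' (convexHull ℝ S)) :=
        subset_closure (Set.mem_image_of_mem _
          (subset_convexHull ℝ S (by rw [hS, Set.mem_iUnion₂]; exact ⟨y, hy, hg'mem⟩)))
      have h3 := hGv _ hg'K
      rw [hh₀] at h3
      have h3' : v < g' h₀ := h3
      have h4 : g' h₁ = n⁻¹ * g' h₀ := by rw [hh₁, map_smul, smul_eq_mul]
      have h5 : g' (-h₁) = - g' h₁ := map_neg g' h₁
      have h6 : n⁻¹ * v < g' h₁ := by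
        rw [h4]
        exact mul_lt_mul_of_pos_left h3' (inv_pos.2 hnpos)
      simp only at hzgt
      rw [← hg'eq, h5] at hzgt
      linarith
    have hfin : p h ≤ p (-h₁) := hopt (-h₁) (by rw [norm_neg, hnorm1])
    have huv' : n⁻¹ * u < n⁻¹ * v := mul_lt_mul_of_pos_left huv (inv_pos.2 hnpos)
    have hru' : r < n⁻¹ * u := by
      have h1 := mul_lt_mul_of_pos_left hru (inv_pos.2 hnpos)
      rwa [← mul_assoc, inv_mul_cancel₀ hnpos.ne', one_mul] at h1
    have : p h = -r := by rw [hr]; ring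
    linarith
  have hfinal : a h = p h := le_antisymm hahp (by linarith)
  exact ⟨by linarith, hfinal⟩
end

section
/- Let X be a reflexive Banach space, let A ⊂ X be nonempty, and let f : X → ℝ be Lipschitz continuous on a neighborhood of A. Then there exists a pair (ã, h̃) with ã ∈ ∂f(A), ‖h̃‖ ≤ 1, such that ‖ã‖ = min_{a ∈ ∂f(A)} ‖a‖ and f⁰(A;h̃) = min_{‖h‖≤1} f⁰(A;h). -/
open Filter Metric Set NormedSpace
open scoped NNReal

variable {X : Type*} [NormedAddCommGroup X] [NormedSpace ℝ X]

namespace ClarkeAux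

/-- The difference quotient appearing in Clarke's derivative. -/
noncomputable def dq (f : X → ℝ) (h : X) (p : X × ℝ) : ℝ := (f (p.1 + p.2 • h) - f p.1) / p.2

/-- The filter over which the limsup is taken. -/
def Fl (y : X) : Filter (X × ℝ) := (nhds y) ×ˢ (nhdsWithin 0 (Set.Ioi 0))

lemma clarkeDeriv_eq (f : X → ℝ) (y h : X) :
    clarkeDeriv f y h = Filter.limsup (dq f h) (Fl y) := rfl

instance Fl_neBot (y : X) : (Fl y).NeBot := by
  unfold Fl
  infer_instance

lemma eventually_pos {y : X} : ∀ᶠ p : X × ℝ in Fl y, 0 < p.2 :=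
  Filter.tendsto_snd.eventually eventually_mem_nhdsWithin

lemma tendsto_base {y : X} (h : X) :
    Filter.Tendsto (fun p : X × ℝ => p.1 + p.2 • h) (Fl y) (nhds y) := by
  have h1 : Filter.Tendsto (fun p : X × ℝ => p.2) (Fl y) (nhds (0:ℝ)) :=
    Filter.tendsto_snd.mono_right nhdsWithin_le_nhds
  have h2 := Filter.tendsto_fst.add (h1.smul_const h)
  simpa [Fl] using h2

variable {f : X → ℝ} {L : ℝ≥0} {U : Set X} {y : X}

lemma eventually_bound (hU : IsOpen U) (hL : LipschitzOnWith L f U) (hy : y ∈ U) (h : X) :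
    ∀ᶠ p : X × ℝ in Fl y, |dq f h p| ≤ (L : ℝ) * ‖h‖ := by
  have h1 : ∀ᶠ p : X × ℝ in Fl y, p.1 ∈ U :=
    Filter.tendsto_fst.eventually (hU.eventually_mem hy)
  have h2 : ∀ᶠ p : X × ℝ in Fl y, p.1 + p.2 • h ∈ U :=
    (tendsto_base h).eventually (hU.eventually_mem hy)
  filter_upwards [h1, h2, eventually_pos] with p hp1 hp2 hp3
  have hd : dist (f (p.1 + p.2 • h)) (f p.1) ≤ (L : ℝ) * dist (p.1 + p.2 • h) p.1 :=
    hL.dist_le_mul _ hp2 _ hp1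
  have hdist : dist (p.1 + p.2 • h) p.1 = p.2 * ‖h‖ := by
    rw [dist_eq_norm]
    simp [norm_smul, abs_of_pos hp3]
  rw [Real.dist_eq, hdist] at hd
  have : |dq f h p| = |f (p.1 + p.2 • h) - f p.1| / p.2 := by
    rw [dq, abs_div, abs_of_pos hp3]
  rw [this]
  rw [div_le_iff₀ hp3]
  calc |f (p.1 + p.2 • h) - f p.1| ≤ (L : ℝ) * (p.2 * ‖h‖) := hd
    _ = (L : ℝ) * ‖h‖ * p.2 := by ring

lemma isBoundedUnder_le (hU : IsOpen U) (hL : LipschitzOnWith L f U) (hy : y ∈ U) (h : X) :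
    (Fl y).IsBoundedUnder (· ≤ ·) (dq f h) :=
  Filter.isBoundedUnder_of_eventually_le <|
    (eventually_bound hU hL hy h).mono fun p hp => (abs_le.1 hp).2

lemma isCoboundedUnder_le (hU : IsOpen U) (hL : LipschitzOnWith L f U) (hy : y ∈ U) (h : X) :
    (Fl y).IsCoboundedUnder (· ≤ ·) (dq f h) :=
  Filter.isCoboundedUnder_le_of_eventually_le (Fl y) <|
    (eventually_bound hU hL hy h).mono fun p hp => (abs_le.1 hp).1

lemma clarkeDeriv_le (hU : IsOpen U) (hL : LipschitzOnWith L f U) (hy : y ∈ U) (h : X) :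
    clarkeDeriv f y h ≤ (L : ℝ) * ‖h‖ := by
  rw [clarkeDeriv_eq]
  exact Filter.limsup_le_of_le (isCoboundedUnder_le hU hL hy h)
    ((eventually_bound hU hL hy h).mono fun p hp => (abs_le.1 hp).2)

lemma neg_le_clarkeDeriv (hU : IsOpen U) (hL : LipschitzOnWith L f U) (hy : y ∈ U) (h : X) :
    -((L : ℝ) * ‖h‖) ≤ clarkeDeriv f y h := by
  rw [clarkeDeriv_eq]
  exact Filter.le_limsup_of_frequently_le
    (((eventually_bound hU hL hy h).mono fun p hp => (abs_le.1 hp).1).frequently)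
    (isBoundedUnder_le hU hL hy h)

lemma clarkeDeriv_zero (f : X → ℝ) (y : X) : clarkeDeriv f y (0 : X) = 0 := by
  rw [clarkeDeriv_eq]
  have : dq f (0 : X) = fun _ : X × ℝ => (0:ℝ) := by
    funext p; simp [dq]
  rw [this, Filter.limsup_const]

lemma clarkeDeriv_add_le (hU : IsOpen U) (hL : LipschitzOnWith L f U) (hy : y ∈ U) (h k : X) :
    clarkeDeriv f y (h + k) ≤ clarkeDeriv f y h + clarkeDeriv f y k := by
  have hm : Filter.Tendsto (fun p : X × ℝ => (p.1 + p.2 • k, p.2)) (Fl y) (Fl y) :=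
    Filter.Tendsto.prodMk (tendsto_base k)
      (by exact Filter.tendsto_snd)
  refine le_of_forall_pos_le_add fun ε hε => ?_
  have e1 : ∀ᶠ q in Fl y, dq f h q < clarkeDeriv f y h + ε / 2 :=
    Filter.eventually_lt_of_limsup_lt (by rw [← clarkeDeriv_eq]; linarith) (isBoundedUnder_le hU hL hy h)
  have e1' : ∀ᶠ p in Fl y, dq f h (p.1 + p.2 • k, p.2) < clarkeDeriv f y h + ε / 2 :=
    hm.eventually e1
  have e2 : ∀ᶠ p in Fl y, dq f k p < clarkeDeriv f y k + ε / 2 :=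
    Filter.eventually_lt_of_limsup_lt (by rw [← clarkeDeriv_eq]; linarith) (isBoundedUnder_le hU hL hy k)
  rw [clarkeDeriv_eq]
  refine Filter.limsup_le_of_le (isCoboundedUnder_le hU hL hy (h + k)) ?_
  filter_upwards [e1', e2] with p hp1 hp2
  have key : dq f (h + k) p = dq f h (p.1 + p.2 • k, p.2) + dq f k p := by
    simp only [dq]
    rw [← add_div]
    congr 1
    have : p.1 + p.2 • (h + k) = p.1 + p.2 • k + p.2 • h := by
      rw [smul_add]; abel
    rw [this]
    ring
  rw [key]
  linarith

lemma clarkeDeriv_smul_le (hU : IsOpen U) (hL : LipschitzOnWith L f U) (hy : y ∈ U)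
    {c : ℝ} (hc : 0 < c) (h : X) :
    clarkeDeriv f y (c • h) ≤ c * clarkeDeriv f y h := by
  have hm : Filter.Tendsto (fun p : X × ℝ => (p.1, c * p.2)) (Fl y) (Fl y) := by
    refine Filter.Tendsto.prodMk Filter.tendsto_fst ?_
    rw [tendsto_nhdsWithin_iff]
    constructor
    · have h1 : Filter.Tendsto (fun p : X × ℝ => p.2) (Fl y) (nhds (0:ℝ)) :=
        Filter.tendsto_snd.mono_right nhdsWithin_le_nhds
      simpa using h1.const_mul c
    · exact eventually_pos.mono fun p hp => by
        exact mul_pos hc hp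
  have key : ∀ p : X × ℝ, dq f (c • h) p = c * dq f h (p.1, c * p.2) := by
    intro p
    simp only [dq]
    have h1 : p.2 • (c • h) = (c * p.2) • h := by
      rw [smul_smul, mul_comm]
    rw [h1, mul_div_assoc']
    rw [mul_div_mul_left _ _ (ne_of_gt hc)]
  refine le_of_forall_pos_le_add fun ε hε => ?_
  have hε' : 0 < ε / c := div_pos hε hc
  have e1 : ∀ᶠ q in Fl y, dq f h q < clarkeDeriv f y h + ε / c :=
    Filter.eventually_lt_of_limsup_lt (by rw [← clarkeDeriv_eq]; linarith) (isBoundedUnder_le hU hL hy h)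
  have e1' : ∀ᶠ p in Fl y, dq f h (p.1, c * p.2) < clarkeDeriv f y h + ε / c :=
    hm.eventually e1
  rw [clarkeDeriv_eq]
  refine Filter.limsup_le_of_le (isCoboundedUnder_le hU hL hy (c • h)) ?_
  filter_upwards [e1'] with p hp
  rw [key p]
  have : c * dq f h (p.1, c * p.2) ≤ c * (clarkeDeriv f y h + ε / c) :=
    mul_le_mul_of_nonneg_left hp.le hc.le
  calc c * dq f h (p.1, c * p.2) ≤ c * (clarkeDeriv f y h + ε / c) := this
    _ = c * clarkeDeriv f y h + ε := by field_simp

lemma clarkeDeriv_smul (hU : IsOpen U) (hL : LipschitzOnWith L f U) (hy : y ∈ U)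
    {c : ℝ} (hc : 0 < c) (h : X) :
    clarkeDeriv f y (c • h) = c * clarkeDeriv f y h := by
  refine le_antisymm (clarkeDeriv_smul_le hU hL hy hc h) ?_
  have h2 := clarkeDeriv_smul_le hU hL hy (inv_pos.2 hc) (c • h)
  rw [inv_smul_smul₀ (ne_of_gt hc)] at h2
  calc c * clarkeDeriv f y h ≤ c * (c⁻¹ * clarkeDeriv f y (c • h)) :=
        mul_le_mul_of_nonneg_left h2 hc.le
    _ = clarkeDeriv f y (c • h) := by field_simp


lemma exists_grad (hU : IsOpen U) (hL : LipschitzOnWith L f U) (hy : y ∈ U) (h₀ : X) :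
    ∃ a : StrongDual ℝ X, a ∈ clarkeGrad f y ∧ ‖a‖ ≤ (L : ℝ) ∧ a h₀ = clarkeDeriv f y h₀ := by
  set N : X → ℝ := fun h => clarkeDeriv f y h with hN
  have N_hom : ∀ c : ℝ, 0 < c → ∀ x, N (c • x) = c * N x :=
    fun c hc x => clarkeDeriv_smul hU hL hy hc x
  have N_add : ∀ x z, N (x + z) ≤ N x + N z := fun x z => clarkeDeriv_add_le hU hL hy x z
  have N_zero : N 0 = 0 := clarkeDeriv_zero f y
  have hneg : ∀ x, -N x ≤ N (-x) := by
    intro x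
    have h1 := N_add x (-x)
    rw [add_neg_cancel, N_zero] at h1
    linarith
  have H : ∀ c : ℝ, c • h₀ = 0 → c • N h₀ = 0 := by
    intro c hc
    rcases smul_eq_zero.1 hc with h | h
    · simp [h]
    · simp only [h, hN]
      rw [clarkeDeriv_zero f y]
      simp
  have hdom : ∀ x : (LinearPMap.mkSpanSingleton' (σ := RingHom.id ℝ) h₀ (N h₀) H).domain,
      (LinearPMap.mkSpanSingleton' (σ := RingHom.id ℝ) h₀ (N h₀) H) x ≤ N x := by
    rintro ⟨x, hx⟩
    rcases Submodule.mem_span_singleton.1 hx with ⟨c, rfl⟩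
    rw [LinearPMap.mkSpanSingleton'_apply]
    show c • N h₀ ≤ N (c • h₀)
    rcases lt_trichotomy c 0 with hc | hc | hc
    · have e : c • h₀ = (-c) • (-h₀) := by simp
      rw [e, N_hom (-c) (by linarith) (-h₀)]
      have h2 := hneg h₀
      have h3 : -N h₀ ≤ N (-h₀) := h2
      simp only [smul_eq_mul]
      nlinarith
    · simp [hc, N_zero]
    · rw [N_hom c hc h₀]
      simp
  obtain ⟨g, hg1, hg2⟩ :=
    exists_extension_of_le_sublinear (LinearPMap.mkSpanSingleton' (σ := RingHom.id ℝ) h₀ (N h₀) H) N N_hom N_add hdom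
  have gbound : ∀ x, ‖g x‖ ≤ (L : ℝ) * ‖x‖ := by
    intro x
    have b1 : g x ≤ (L : ℝ) * ‖x‖ := (hg2 x).trans (clarkeDeriv_le hU hL hy x)
    have b2 : -(g x) ≤ (L : ℝ) * ‖x‖ := by
      have := (hg2 (-x)).trans (clarkeDeriv_le hU hL hy (-x))
      rw [map_neg, norm_neg] at this
      exact this
    rw [Real.norm_eq_abs]
    exact abs_le.2 ⟨by linarith, b1⟩
  refine ⟨g.mkContinuous (L : ℝ) gbound, ?_, ?_, ?_⟩
  · intro h
    exact hg2 h
  · exact g.mkContinuous_norm_le L.coe_nonneg gbound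
  · have := hg1 ⟨h₀, Submodule.mem_span_singleton_self h₀⟩
    replace this := this.trans (LinearPMap.mkSpanSingleton'_apply_self (σ := RingHom.id ℝ) _ _ _ _)
    exact this

variable {A : Set X}

lemma bddAbove_image (hU : IsOpen U) (hL : LipschitzOnWith L f U) (hAU : A ⊆ U) (h : X) :
    BddAbove ((fun y => clarkeDeriv f y h) '' A) := by
  refine ⟨(L : ℝ) * ‖h‖, ?_⟩
  rintro v ⟨y, hy, rfl⟩
  exact clarkeDeriv_le hU hL (hAU hy) h

lemma le_setDeriv (hU : IsOpen U) (hL : LipschitzOnWith L f U) (hAU : A ⊆ U)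
    (hy : y ∈ A) (h : X) : clarkeDeriv f y h ≤ setDeriv f A h :=
  le_csSup (bddAbove_image hU hL hAU h) (mem_image_of_mem _ hy)

lemma setDeriv_le (hA : A.Nonempty) (hU : IsOpen U) (hL : LipschitzOnWith L f U)
    (hAU : A ⊆ U) (h : X) : setDeriv f A h ≤ (L : ℝ) * ‖h‖ := by
  refine csSup_le (hA.image _) ?_
  rintro v ⟨y, hy, rfl⟩
  exact clarkeDeriv_le hU hL (hAU hy) h

lemma setDeriv_zero (hA : A.Nonempty) : setDeriv f A (0 : X) = 0 := by
  obtain ⟨y₀, hy₀⟩ := hA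
  apply le_antisymm
  · refine csSup_le (Set.Nonempty.image _ ⟨y₀, hy₀⟩) ?_
    rintro v ⟨y, hy, rfl⟩
    exact le_of_eq (clarkeDeriv_zero f y)
  · have hmem : (0 : ℝ) ∈ (fun y => clarkeDeriv f y (0 : X)) '' A :=
      ⟨y₀, hy₀, clarkeDeriv_zero f y₀⟩
    refine le_csSup ⟨0, ?_⟩ hmem
    rintro v ⟨y, hy, rfl⟩
    exact le_of_eq (clarkeDeriv_zero f y)

lemma grad_subset_setGrad (hy : y ∈ A) : clarkeGrad f y ⊆ setGrad f A := by
  intro a ha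
  have hmem : StrongDual.toWeakDual (𝕜 := ℝ) (E := X) a ∈
      (StrongDual.toWeakDual (𝕜 := ℝ) (E := X)) '' (convexHull ℝ (⋃ y ∈ A, clarkeGrad f y)) :=
    mem_image_of_mem _ (subset_convexHull ℝ _ (Set.mem_biUnion hy ha))
  exact subset_closure (X := WeakDual ℝ X) hmem

lemma setGrad_apply_le (hU : IsOpen U) (hL : LipschitzOnWith L f U) (hAU : A ⊆ U)
    {a : StrongDual ℝ X} (ha : a ∈ setGrad f A) (h : X) :
    a h ≤ setDeriv f A h := by
  set c := setDeriv f A h with hc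
  have hTclosed : IsClosed {b : WeakDual ℝ X | b h ≤ c} :=
    IsClosed.preimage (WeakDual.eval_continuous h) isClosed_Iic
  have hsub : (StrongDual.toWeakDual (𝕜 := ℝ) (E := X)) '' (convexHull ℝ (⋃ y ∈ A, clarkeGrad f y)) ⊆
      {b : WeakDual ℝ X | b h ≤ c} := by
    rintro _ ⟨b, hb, rfl⟩
    have hb' : b ∈ {b : StrongDual ℝ X | b h ≤ c} := by
      refine convexHull_min ?_ ?_ hb
      · rintro b' hb'
        simp only [Set.mem_iUnion] at hb'
        obtain ⟨y, hy, hby⟩ := hb'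
        exact le_trans (hby h) (le_setDeriv hU hL hAU hy h)
      · exact convex_halfSpace_le ⟨fun a b => rfl, fun s a => rfl⟩ c
    exact hb'
  exact closure_minimal hsub hTclosed ha

lemma setGrad_norm_le (hA : A.Nonempty) (hU : IsOpen U) (hL : LipschitzOnWith L f U)
    (hAU : A ⊆ U) {a : StrongDual ℝ X} (ha : a ∈ setGrad f A) : ‖a‖ ≤ (L : ℝ) := by
  refine ContinuousLinearMap.opNorm_le_bound a L.coe_nonneg fun h => ?_
  have h1 : a h ≤ (L : ℝ) * ‖h‖ :=
    (setGrad_apply_le hU hL hAU ha h).trans (setDeriv_le hA hU hL hAU h)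
  have h2 : -(a h) ≤ (L : ℝ) * ‖h‖ := by
    have := (setGrad_apply_le hU hL hAU ha (-h)).trans (setDeriv_le hA hU hL hAU (-h))
    rw [map_neg, norm_neg] at this
    exact this
  rw [Real.norm_eq_abs]
  exact abs_le.2 ⟨by linarith, h1⟩

lemma isClosed_norm_sublevel (c : ℝ) :
    IsClosed {x : WeakDual ℝ X | ‖WeakDual.toStrongDual x‖ ≤ c} := by
  rcases lt_or_ge c 0 with hc | hc
  · have he : {x : WeakDual ℝ X | ‖WeakDual.toStrongDual x‖ ≤ c} = ∅ := by
      refine Set.eq_empty_iff_forall_notMem.2 fun x hx => ?_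
      have := le_trans (norm_nonneg (WeakDual.toStrongDual x)) hx
      linarith
    rw [he]; exact isClosed_empty
  · have he : {x : WeakDual ℝ X | ‖WeakDual.toStrongDual x‖ ≤ c} =
        ⋂ z : X, {x : WeakDual ℝ X | ‖x z‖ ≤ c * ‖z‖} := by
      ext x
      simp only [Set.mem_setOf_eq, Set.mem_iInter]
      constructor
      · intro hx z
        calc ‖x z‖ = ‖(WeakDual.toStrongDual x) z‖ := rfl
          _ ≤ ‖WeakDual.toStrongDual x‖ * ‖z‖ := (WeakDual.toStrongDual x).le_opNorm z
          _ ≤ c * ‖z‖ := by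
              exact mul_le_mul_of_nonneg_right hx (norm_nonneg z)
      · intro hx
        exact ContinuousLinearMap.opNorm_le_bound _ hc fun z => hx z
    rw [he]
    exact isClosed_iInter fun z =>
      IsClosed.preimage ((WeakDual.eval_continuous z).norm) isClosed_Iic

end ClarkeAux

set_option maxHeartbeats 1600000 in
/-- Proposition 3.1(3): in a reflexive Banach space there exists a pair `(ã, h̃)` with
`ã ∈ ∂f(A)` of minimal norm and `h̃` in the unit ball minimizing `f⁰(A;·)`. -/
theorem exists_minimal_pair_of_reflexive
    [CompleteSpace X]
    (hrefl : Function.Surjective (inclusionInDoubleDual ℝ X))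
    (A : Set X) (hA : A.Nonempty) (f : X → ℝ)
    (hf : ∃ (L : ℝ≥0) (U : Set X), IsOpen U ∧ A ⊆ U ∧ LipschitzOnWith L f U) :
    ∃ a ∈ setGrad f A, ∃ h : X, ‖h‖ ≤ 1 ∧
      (∀ b ∈ setGrad f A, ‖a‖ ≤ ‖b‖) ∧
      (∀ h' : X, ‖h'‖ ≤ 1 → setDeriv f A h ≤ setDeriv f A h') := by
  classical
  obtain ⟨L, U, hU, hAU, hL⟩ := hf
  obtain ⟨y₀, hy₀⟩ := hA
  have hAne : A.Nonempty := ⟨y₀, hy₀⟩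
  set S : Set (WeakDual ℝ X) :=
    (StrongDual.toWeakDual (𝕜 := ℝ) (E := X)) '' (convexHull ℝ (⋃ y ∈ A, clarkeGrad f y)) with hS
  set Kw := closure S with hKw
  -- setGrad nonempty
  obtain ⟨a₀, ha₀G, _, _⟩ := ClarkeAux.exists_grad hU hL (hAU hy₀) 0
  have ha₀ : a₀ ∈ setGrad f A := ClarkeAux.grad_subset_setGrad hy₀ ha₀G
  -- set of norms
  set D : Set ℝ := (fun a : StrongDual ℝ X => ‖a‖) '' (setGrad f A) with hD
  have hDne : D.Nonempty := ⟨‖a₀‖, a₀, ha₀, rfl⟩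
  have hDbdd : BddBelow D := ⟨0, by rintro v ⟨b, _, rfl⟩; exact norm_nonneg b⟩
  set d := sInf D with hd
  have hd0 : 0 ≤ d := le_csInf hDne (by rintro v ⟨b, _, rfl⟩; exact norm_nonneg b)
  have hd_le : ∀ b ∈ setGrad f A, d ≤ ‖b‖ := fun b hb => csInf_le hDbdd ⟨b, hb, rfl⟩
  -- Kw is compact
  have hKw_sub : Kw ⊆ WeakDual.toStrongDual ⁻¹' Metric.closedBall (0 : StrongDual ℝ X) (L : ℝ) := by
    intro x hx
    have hx' : WeakDual.toStrongDual x ∈ setGrad f A := hx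
    simp only [Set.mem_preimage, Metric.mem_closedBall, dist_zero_right]
    exact ClarkeAux.setGrad_norm_le hAne hU hL hAU hx'
  have hKw_closed : IsClosed Kw := isClosed_closure
  have hKw_cpt : IsCompact Kw :=
    IsCompact.of_isClosed_subset (WeakDual.isCompact_closedBall (𝕜 := ℝ) (E := X) 0 (L : ℝ))
      hKw_closed hKw_sub
  -- minimal norm element by Cantor's intersection theorem
  set t : ℕ → Set (WeakDual ℝ X) :=
    fun n => Kw ∩ {x | ‖WeakDual.toStrongDual x‖ ≤ d + 1 / (n + 1)} with htdef
  have ht_closed : ∀ n, IsClosed (t n) :=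
    fun n => hKw_closed.inter (ClarkeAux.isClosed_norm_sublevel _)
  have ht_cpt : ∀ n, IsCompact (t n) :=
    fun n => IsCompact.of_isClosed_subset hKw_cpt (ht_closed n) Set.inter_subset_left
  have ht_ne : ∀ n, (t n).Nonempty := by
    intro n
    have hpos : (0 : ℝ) < 1 / ((n : ℝ) + 1) := by positivity
    obtain ⟨v, hv, hvlt⟩ :=
      exists_lt_of_csInf_lt hDne (show sInf D < d + 1 / ((n : ℝ) + 1) by rw [← hd]; linarith)
    obtain ⟨b, hb, rfl⟩ := hv
    exact ⟨StrongDual.toWeakDual b, hb, hvlt.le⟩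
  have ht_dir : Directed (· ⊇ ·) t := by
    have mono : ∀ {m n : ℕ}, m ≤ n → t n ⊆ t m := by
      intro m n hmn
      refine Set.inter_subset_inter_right _ fun x hx => ?_
      have h1 : 1 / ((n : ℝ) + 1) ≤ 1 / ((m : ℝ) + 1) := by
        apply one_div_le_one_div_of_le (by positivity)
        exact_mod_cast Nat.succ_le_succ hmn
      simp only [Set.mem_setOf_eq] at hx ⊢
      linarith
    exact fun m n => ⟨max m n, mono (le_max_left m n), mono (le_max_right m n)⟩
  obtain ⟨xt, hxt⟩ :=
    IsCompact.nonempty_iInter_of_directed_nonempty_isCompact_isClosed t ht_dir ht_ne ht_cpt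
      ht_closed
  simp only [Set.mem_iInter] at hxt
  set ta := WeakDual.toStrongDual xt with hta
  have htaG : ta ∈ setGrad f A := (hxt 0).1
  have htad : ‖ta‖ ≤ d := by
    refine le_of_forall_pos_le_add fun ε hε => ?_
    obtain ⟨n, hn⟩ := exists_nat_one_div_lt hε
    have h1 := (hxt n).2
    have h2 : ‖ta‖ ≤ d + 1 / ((n : ℝ) + 1) := h1
    linarith
  have hnorm : ‖ta‖ = d := le_antisymm htad (hd_le ta htaG)
  rcases eq_or_lt_of_le hd0 with hcase | hd_pos
  · -- d = 0 : the pair (ta, 0) works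
    refine ⟨ta, htaG, 0, by simp, ?_, ?_⟩
    · intro b hb; rw [hnorm]; exact hd_le b hb
    · intro h' _
      rw [ClarkeAux.setDeriv_zero hAne]
      have h1 : ta h' ≤ setDeriv f A h' := ClarkeAux.setGrad_apply_le hU hL hAU htaG h'
      have h2 : ta = 0 := by
        rw [← norm_eq_zero, hnorm, ← hcase]
      rw [h2] at h1
      simpa using h1
  · -- d > 0 : separation
    have hconv : Convex ℝ (setGrad f A) := by
      have hSconv : Convex ℝ S :=
        (convex_convexHull ℝ _).is_linear_image
          ⟨fun a b => map_add _ a b, fun c a => map_smul _ c a⟩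
      have hKwconv : Convex ℝ Kw := hSconv.closure
      intro a ha b hb s r hs hr hsr
      have heq : StrongDual.toWeakDual (𝕜 := ℝ) (E := X) (s • a + r • b) =
          s • StrongDual.toWeakDual a + r • StrongDual.toWeakDual b := by
        simp [map_add, map_smul]
      show StrongDual.toWeakDual (s • a + r • b) ∈ Kw
      rw [heq]
      exact hKwconv ha hb hs hr hsr
    have hdisj : Disjoint (Metric.ball (0 : StrongDual ℝ X) d) (setGrad f A) :=
      Set.disjoint_left.2 fun a haB haC =>
        absurd (hd_le a haC) (not_le.2 (mem_ball_zero_iff.1 haB))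
    obtain ⟨F, u, hF1, hF2⟩ :=
      geometric_hahn_banach_open (convex_ball 0 d) isOpen_ball hconv hdisj
    obtain ⟨x₀, hx₀⟩ := hrefl F
    have hFapp : ∀ b : StrongDual ℝ X, F b = b x₀ := fun b => by rw [← hx₀]; rfl
    have hu_pos : 0 < u := by
      have := hF1 0 (mem_ball_self hd_pos)
      simpa using this
    have key : ∀ b : StrongDual ℝ X, ‖b‖ ≤ 1 → d * b x₀ ≤ u := by
      intro b hb
      by_contra hcon
      push_neg at hcon
      have hs : 0 < b x₀ := by nlinarith
      have ht0 : 0 < u / b x₀ := div_pos hu_pos hs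
      have htd : u / b x₀ < d := (div_lt_iff₀ hs).2 (by linarith)
      have hmem : (u / b x₀) • b ∈ Metric.ball (0 : StrongDual ℝ X) d := by
        rw [mem_ball_zero_iff, norm_smul, Real.norm_eq_abs, abs_of_pos ht0]
        calc (u / b x₀) * ‖b‖ ≤ (u / b x₀) * 1 := mul_le_mul_of_nonneg_left hb ht0.le
          _ < d := by linarith
      have hlt := hF1 _ hmem
      rw [map_smul, smul_eq_mul, hFapp b] at hlt
      rw [div_mul_cancel₀ u (ne_of_gt hs)] at hlt
      exact lt_irrefl u hlt
    have hx₀norm : ‖x₀‖ ≤ u / d := by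
      refine norm_le_dual_bound ℝ x₀ (by positivity) fun b => ?_
      rcases eq_or_ne b 0 with rfl | hbne
      · simp
      · have hbpos : 0 < ‖b‖ := norm_pos_iff.2 hbne
        have hnb : ‖‖b‖⁻¹ • b‖ = 1 := by
          rw [norm_smul, Real.norm_eq_abs, abs_of_pos (inv_pos.2 hbpos),
            inv_mul_cancel₀ (ne_of_gt hbpos)]
        set w : ℝ := ‖b‖⁻¹ * b x₀ with hw
        have h1 := key (‖b‖⁻¹ • b) (le_of_eq hnb)
        have h2 := key (-(‖b‖⁻¹ • b)) (le_of_eq (by rw [norm_neg, hnb]))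
        have e1 : (‖b‖⁻¹ • b) x₀ = w := by
          rw [ContinuousLinearMap.smul_apply, smul_eq_mul, hw]
        have e2 : (-(‖b‖⁻¹ • b)) x₀ = -w := by
          rw [ContinuousLinearMap.neg_apply, e1]
        rw [e1] at h1; rw [e2] at h2
        have hw1 : w ≤ u / d := (le_div_iff₀ hd_pos).2 (by linarith [h1])
        have hw2 : -w ≤ u / d := (le_div_iff₀ hd_pos).2 (by linarith [h2])
        have habsw : |w| ≤ u / d := abs_le.2 ⟨by linarith, hw1⟩
        have hbw : b x₀ = ‖b‖ * w := by
          rw [hw]; field_simp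
        rw [Real.norm_eq_abs, hbw, abs_mul, abs_of_pos hbpos]
        calc ‖b‖ * |w| ≤ ‖b‖ * (u / d) := mul_le_mul_of_nonneg_left habsw hbpos.le
          _ = (u / d) * ‖b‖ := by ring
    have hux : ∀ a ∈ setGrad f A, d * ‖x₀‖ ≤ a x₀ := by
      intro a ha
      have h1 : u ≤ F a := hF2 a ha
      rw [hFapp] at h1
      have h2 : d * ‖x₀‖ ≤ u := by
        calc d * ‖x₀‖ ≤ d * (u / d) := mul_le_mul_of_nonneg_left hx₀norm hd_pos.le
          _ = u := by field_simp
      linarith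
    have hx₀ne : x₀ ≠ 0 := by
      intro h0
      have h1 := hF2 ta htaG
      rw [hFapp, h0] at h1
      simp only [map_zero] at h1
      linarith
    have hx₀pos : 0 < ‖x₀‖ := norm_pos_iff.2 hx₀ne
    set x₁ := ‖x₀‖⁻¹ • x₀ with hx₁
    have hx₁norm : ‖x₁‖ = 1 := by
      rw [hx₁, norm_smul, Real.norm_eq_abs, abs_of_pos (inv_pos.2 hx₀pos),
        inv_mul_cancel₀ (ne_of_gt hx₀pos)]
    have hax₁ : ∀ a ∈ setGrad f A, d ≤ a x₁ := by
      intro a ha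
      have h1 := hux a ha
      have h2 : a x₁ = ‖x₀‖⁻¹ * a x₀ := by
        rw [hx₁, map_smul, smul_eq_mul]
      have h3 := mul_le_mul_of_nonneg_left h1 (inv_nonneg.2 hx₀pos.le)
      have h4 : ‖x₀‖⁻¹ * (d * ‖x₀‖) = d := by field_simp
      rw [h4] at h3
      rw [h2]
      exact h3
    refine ⟨ta, htaG, -x₁, ?_, ?_, ?_⟩
    · rw [norm_neg, hx₁norm]
    · intro b hb; rw [hnorm]; exact hd_le b hb
    · intro h' hh'
      have hle : setDeriv f A (-x₁) ≤ -d := by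
        refine csSup_le (Set.Nonempty.image _ hAne) ?_
        rintro v ⟨y, hy, rfl⟩
        show clarkeDeriv f y (-x₁) ≤ -d
        obtain ⟨a, haG, _, hval⟩ := ClarkeAux.exists_grad hU hL (hAU hy) (-x₁)
        rw [← hval, map_neg]
        have := hax₁ a (ClarkeAux.grad_subset_setGrad hy haG)
        linarith
      have hge : -d ≤ setDeriv f A h' := by
        have h1 : ta h' ≤ setDeriv f A h' := ClarkeAux.setGrad_apply_le hU hL hAU htaG h'
        have h2 : |ta h'| ≤ ‖ta‖ * ‖h'‖ := by
          have := ta.le_opNorm h'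
          simpa [Real.norm_eq_abs] using this
        have h3 : ‖ta‖ * ‖h'‖ ≤ d := by
          rw [hnorm]
          nlinarith [norm_nonneg h']
        have h4 := abs_le.1 h2
        linarith [h4.1]
      linarith
end

section
/- Let X be a uniformly convex Banach space (or a finite-dimensional strictly convex space) whose dual X* is strictly convex, let A ⊂ X be nonempty, let f : X → ℝ be Lipschitz continuous on a neighborhood of A with 0 ∉ ∂f(A), and let ã be the unique element of ∂f(A) of minimal norm. Then for every δ ∈ ]0,1[ there exists τ > 0 such that for every a' ∈ ∂f(A) with ‖a'‖ ≤ ‖ã‖ + τ, the unique h' ∈ X satisfying ⟨a', h'⟩ = −‖a'‖ and ‖h'‖ = 1 is a descent direction of f on A with f⁰(A;h') < −δ‖ã‖. -/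
open Filter Metric Set NormedSpace Topology
open scoped NNReal

variable {X : Type*} [NormedAddCommGroup X] [NormedSpace ℝ X]

/-- `h` is an optimal (steepest) descent direction of `f` on `A`. -/
noncomputable def IsOptimalDescent (f : X → ℝ) (A : Set X) (h : X) : Prop :=
  ‖h‖ = 1 ∧ (∀ h' : X, ‖h'‖ ≤ 1 → setDeriv f A h ≤ setDeriv f A h') ∧ setDeriv f A h < 0


set_option linter.unusedSectionVars false
set_option maxHeartbeats 2000000

namespace Aux

noncomputable def Q (f : X → ℝ) (h : X) (p : X × ℝ) : ℝ := (f (p.1 + p.2 • h) - f p.1) / p.2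

noncomputable def F (y : X) : Filter (X × ℝ) := (nhds y) ×ˢ (nhdsWithin 0 (Set.Ioi 0))

instance (y : X) : (F y).NeBot := by unfold F; infer_instance

lemma clarkeDeriv_eq' (f : X → ℝ) (x h : X) : clarkeDeriv f x h = Filter.limsup (Q f h) (F x) := rfl

lemma norm_add_lt_two [StrictConvexSpace ℝ X] {x y : X} (hx : ‖x‖ ≤ 1) (hy : ‖y‖ ≤ 1)
    (hne : x ≠ y) : ‖x + y‖ < 2 := by
  by_cases hray : SameRay ℝ x y
  · have heq : ‖x + y‖ = ‖x‖ + ‖y‖ := hray.norm_add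
    rcases eq_or_lt_of_le hx with hx1 | hx1
    · rcases eq_or_lt_of_le hy with hy1 | hy1
      · exact absurd (hray.eq_of_norm_eq (hx1.trans hy1.symm)) hne
      · rw [heq]; linarith
    · rw [heq]; linarith
  · have h2 := norm_add_lt_of_not_sameRay hray
    calc ‖x + y‖ < ‖x‖ + ‖y‖ := h2
      _ ≤ 2 := by linarith

lemma uniformConvexSpace_of_finiteDimensional [FiniteDimensional ℝ X]
    [StrictConvexSpace ℝ X] : UniformConvexSpace X := by
  constructor
  intro ε hε
  set S : Set (X × X) := {p | ‖p.1‖ ≤ 1 ∧ ‖p.2‖ ≤ 1 ∧ ε ≤ ‖p.1 - p.2‖} with hSdef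
  rcases eq_empty_or_nonempty S with hS | hS
  · exact ⟨1, one_pos, fun x hx y hy hxy =>
      absurd (show (x, y) ∈ S from ⟨hx.le, hy.le, hxy⟩) (by rw [hS]; exact notMem_empty _)⟩
  · have hclosed : IsClosed S := by
      have h1 : IsClosed {p : X × X | ‖p.1‖ ≤ 1} :=
        isClosed_le (continuous_fst.norm) continuous_const
      have h2 : IsClosed {p : X × X | ‖p.2‖ ≤ 1} :=
        isClosed_le (continuous_snd.norm) continuous_const
      have h3 : IsClosed {p : X × X | ε ≤ ‖p.1 - p.2‖} :=
        isClosed_le continuous_const ((continuous_fst.sub continuous_snd).norm)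
      rw [hSdef, setOf_and, setOf_and]
      exact h1.inter (h2.inter h3)
    have hbdd : Bornology.IsBounded S := by
      refine (Metric.isBounded_closedBall (x := ((0 : X), (0 : X))) (r := 1)).subset ?_
      rintro ⟨p1, p2⟩ ⟨hp1, hp2, -⟩
      rw [Metric.mem_closedBall, Prod.dist_eq]
      simp only [dist_zero_right]
      exact max_le hp1 hp2
    have hcompact : IsCompact S := Metric.isCompact_of_isClosed_isBounded hclosed hbdd
    have hcont : Continuous fun p : X × X => ‖p.1 + p.2‖ :=
      (continuous_fst.add continuous_snd).norm
    obtain ⟨p₀, hp₀S, hmax⟩ := hcompact.exists_isMaxOn hS hcont.continuousOn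
    have hne : p₀.1 ≠ p₀.2 := by
      intro heq
      have := hp₀S.2.2
      rw [heq, sub_self, norm_zero] at this
      linarith
    have hlt : ‖p₀.1 + p₀.2‖ < 2 := norm_add_lt_two hp₀S.1 hp₀S.2.1 hne
    refine ⟨2 - ‖p₀.1 + p₀.2‖, by linarith, fun x hx y hy hxy => ?_⟩
    have hmem : (x, y) ∈ S := ⟨hx.le, hy.le, hxy⟩
    have := hmax hmem
    simp only [Set.mem_setOf_eq] at this
    linarith [this]

lemma exists_dual_attain [CompleteSpace X] [UniformConvexSpace X] (a : StrongDual ℝ X) (ha : a ≠ 0) :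
    ∃ h : X, ‖h‖ = 1 ∧ a h = -‖a‖ := by
  have hpos : 0 < ‖a‖ := norm_pos_iff.mpr ha
  have hseq : ∀ n : ℕ, ∃ x : X, ‖x‖ ≤ 1 ∧ a x ≤ -(‖a‖ * (1 - 1 / (n + 1))) := by
    intro n
    have hfrac : 0 < 1 / ((n : ℝ) + 1) := by positivity
    have hlt : ‖a‖ * (1 - 1 / (n + 1)) < ‖a‖ := by nlinarith
    obtain ⟨x, hx1, hx2⟩ := a.exists_lt_apply_of_lt_opNorm hlt
    rw [Real.norm_eq_abs] at hx2
    rcases le_or_gt (a x) 0 with hs | hs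
    · refine ⟨x, hx1.le, ?_⟩
      rw [abs_of_nonpos hs] at hx2
      linarith
    · refine ⟨-x, (norm_neg x).le.trans hx1.le, ?_⟩
      rw [abs_of_pos hs] at hx2
      rw [map_neg]
      linarith
  choose x hx1 hx2 using hseq
  have hcauchy : CauchySeq x := by
    rw [Metric.cauchySeq_iff]
    intro ε hε
    obtain ⟨δ, hδ, hconv⟩ := exists_forall_closed_ball_dist_add_le_two_sub X hε
    obtain ⟨M, hM⟩ := exists_nat_gt (2 / δ)
    refine ⟨M, fun m hm n hn => ?_⟩
    by_contra hcon
    push_neg at hcon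
    rw [dist_eq_norm] at hcon
    have hball := hconv (hx1 m) (hx1 n) hcon
    have hmn : a (x m + x n) ≤ -(‖a‖ * (2 - 1 / (m + 1) - 1 / (n + 1))) := by
      rw [map_add]
      have h1 := hx2 m
      have h2 := hx2 n
      ring_nf
      ring_nf at h1 h2
      linarith
    have habs : -(a (x m + x n)) ≤ ‖a‖ * ‖x m + x n‖ := by
      have h1 : |a (x m + x n)| ≤ ‖a‖ * ‖x m + x n‖ := by
        rw [← Real.norm_eq_abs]
        exact a.le_opNorm _
      linarith [neg_abs_le (a (x m + x n))]
    have hub : ‖a‖ * ‖x m + x n‖ ≤ ‖a‖ * (2 - δ) :=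
      mul_le_mul_of_nonneg_left hball hpos.le
    have hfm : 1 / ((m : ℝ) + 1) ≤ 1 / ((M : ℝ) + 1) := by
      apply div_le_div_of_nonneg_left one_pos.le (by positivity)
      exact_mod_cast add_le_add_left (Nat.cast_le.mpr hm) 1
    have hfn : 1 / ((n : ℝ) + 1) ≤ 1 / ((M : ℝ) + 1) := by
      apply div_le_div_of_nonneg_left one_pos.le (by positivity)
      exact_mod_cast add_le_add_left (Nat.cast_le.mpr hn) 1
    have hMδ : 2 / ((M : ℝ) + 1) < δ := by
      rw [div_lt_iff₀ (by positivity)]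
      rw [div_lt_iff₀ hδ] at hM
      nlinarith
    have key : ‖a‖ * (2 - 1 / (m + 1) - 1 / (n + 1)) ≤ ‖a‖ * (2 - δ) := by linarith
    have key2 : (2 : ℝ) - 1 / (m + 1) - 1 / (n + 1) ≤ 2 - δ := by
      exact le_of_mul_le_mul_left key hpos
    have hsum2 : 1 / ((M : ℝ) + 1) + 1 / ((M : ℝ) + 1) = 2 / ((M : ℝ) + 1) := by ring
    linarith
  obtain ⟨h, hlim⟩ := cauchySeq_tendsto_of_complete hcauchy
  have hnorm_le : ‖h‖ ≤ 1 := le_of_tendsto hlim.norm (Eventually.of_forall hx1)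
  have hah : a h = -‖a‖ := by
    have hcomp : Tendsto (fun n => a (x n)) atTop (𝓝 (a h)) :=
      (a.continuous.tendsto h).comp hlim
    have hupper : Tendsto (fun n : ℕ => -(‖a‖ * (1 - 1 / (n + 1)))) atTop (𝓝 (-‖a‖)) := by
      have h1 : Tendsto (fun n : ℕ => 1 / ((n : ℝ) + 1)) atTop (𝓝 0) :=
        tendsto_one_div_add_atTop_nhds_zero_nat
      have : Tendsto (fun n : ℕ => -(‖a‖ * (1 - 1 / (n + 1)))) atTop
          (𝓝 (-(‖a‖ * (1 - 0)))) := (h1.const_sub 1 |>.const_mul ‖a‖).neg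
      simpa using this
    have hlower : ∀ n, -‖a‖ ≤ a (x n) := by
      intro n
      have h1 : |a (x n)| ≤ ‖a‖ * ‖x n‖ := by
        rw [← Real.norm_eq_abs]; exact a.le_opNorm _
      have h2 : ‖a‖ * ‖x n‖ ≤ ‖a‖ := by
        nlinarith [hx1 n, norm_nonneg (x n)]
      linarith [neg_abs_le (a (x n))]
    have hsq : Tendsto (fun n => a (x n)) atTop (𝓝 (-‖a‖)) :=
      tendsto_of_tendsto_of_tendsto_of_le_of_le tendsto_const_nhds hupper
        (fun n => hlower n) (fun n => hx2 n)
    exact tendsto_nhds_unique hcomp hsq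
  have hnorm_ge : 1 ≤ ‖h‖ := by
    have h1 : |a h| ≤ ‖a‖ * ‖h‖ := by rw [← Real.norm_eq_abs]; exact a.le_opNorm _
    rw [hah, abs_neg, abs_of_pos hpos] at h1
    nlinarith
  exact ⟨h, le_antisymm hnorm_le hnorm_ge, hah⟩

lemma dual_attain_unique [StrictConvexSpace ℝ X] {a : StrongDual ℝ X} (ha : a ≠ 0) {h1 h2 : X}
    (hn1 : ‖h1‖ = 1) (ha1 : a h1 = -‖a‖) (hn2 : ‖h2‖ = 1) (ha2 : a h2 = -‖a‖) : h1 = h2 := by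
  have hpos : 0 < ‖a‖ := norm_pos_iff.mpr ha
  by_contra hne
  have hlt := norm_add_lt_two hn1.le hn2.le hne
  have hsum : a (h1 + h2) = -(2 * ‖a‖) := by rw [map_add, ha1, ha2]; ring
  have h1' : |a (h1 + h2)| ≤ ‖a‖ * ‖h1 + h2‖ := by
    rw [← Real.norm_eq_abs]; exact a.le_opNorm _
  rw [hsum, abs_neg, abs_of_pos (by positivity)] at h1'
  nlinarith



section bounds

variable {L : ℝ≥0} {U : Set X} {f : X → ℝ} {y : X} {A : Set X}

lemma F_le_nhds (y : X) : F y ≤ 𝓝 (y, (0:ℝ)) := by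
  rw [nhds_prod_eq]
  exact Filter.prod_mono le_rfl nhdsWithin_le_nhds

lemma eventually_pos (y : X) : ∀ᶠ p : X × ℝ in F y, 0 < p.2 :=
  Filter.Eventually.prod_inr (eventually_mem_nhdsWithin) _

lemma Qbound {L : ℝ≥0} {U : Set X} {f : X → ℝ} (hU : IsOpen U) (hf : LipschitzOnWith L f U)
    {y : X} (hy : y ∈ U) (h : X) :
    ∀ᶠ p : X × ℝ in F y, |Q f h p| ≤ L * ‖h‖ := by
  have hc : Continuous (fun p : X × ℝ => p.1 + p.2 • h) := by continuity
  have h1 : ∀ᶠ p : X × ℝ in 𝓝 (y, (0:ℝ)), p.1 + p.2 • h ∈ U := by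
    have := hc.continuousAt (x := (y, (0:ℝ)))
    have h0 : (fun p : X × ℝ => p.1 + p.2 • h) (y, (0:ℝ)) ∈ U := by simpa using hy
    exact this.eventually_mem (hU.mem_nhds h0)
  have h2 : ∀ᶠ p : X × ℝ in 𝓝 (y, (0:ℝ)), p.1 ∈ U := by
    have : ContinuousAt (fun p : X × ℝ => p.1) (y, (0:ℝ)) := continuous_fst.continuousAt
    exact this.eventually_mem (hU.mem_nhds hy)
  filter_upwards [(F_le_nhds y) h1, (F_le_nhds y) h2, eventually_pos y] with p hpU hp1 hpos
  have hd := hf.dist_le_mul _ hpU _ hp1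
  have : dist (p.1 + p.2 • h) p.1 = p.2 * ‖h‖ := by
    rw [dist_eq_norm]
    simp [norm_smul, abs_of_pos hpos]
  rw [Real.dist_eq, this] at hd
  have : |Q f h p| = |f (p.1 + p.2 • h) - f p.1| / p.2 := by
    rw [Q, abs_div, abs_of_pos hpos]
  rw [this, div_le_iff₀ hpos]
  calc |f (p.1 + p.2 • h) - f p.1| ≤ L * (p.2 * ‖h‖) := hd
    _ = L * ‖h‖ * p.2 := by ring



lemma isBdd_le (hU : IsOpen U) (hf : LipschitzOnWith L f U) (hy : y ∈ U) (h : X) :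
    IsBoundedUnder (· ≤ ·) (F y) (Q f h) :=
  isBoundedUnder_of_eventually_le
    (by filter_upwards [Qbound hU hf hy h] with p hp using le_of_abs_le hp)

lemma isBdd_ge (hU : IsOpen U) (hf : LipschitzOnWith L f U) (hy : y ∈ U) (h : X) :
    IsBoundedUnder (· ≥ ·) (F y) (Q f h) :=
  isBoundedUnder_of_eventually_ge
    (by filter_upwards [Qbound hU hf hy h] with p hp using neg_le_of_abs_le hp)

lemma isCobdd_le (hU : IsOpen U) (hf : LipschitzOnWith L f U) (hy : y ∈ U) (h : X) :
    IsCoboundedUnder (· ≤ ·) (F y) (Q f h) :=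
  (isBdd_ge hU hf hy h).isCoboundedUnder_le

lemma clarkeDeriv_le (hU : IsOpen U) (hf : LipschitzOnWith L f U) (hy : y ∈ U) (h : X) :
    clarkeDeriv f y h ≤ L * ‖h‖ := by
  rw [clarkeDeriv_eq']
  refine limsup_le_of_le (isCobdd_le hU hf hy h) ?_
  filter_upwards [Qbound hU hf hy h] with p hp using le_of_abs_le hp

lemma clarkeDeriv_zero (f : X → ℝ) (y : X) : clarkeDeriv f y 0 = 0 := by
  rw [clarkeDeriv_eq']
  have : Q f (0 : X) = fun _ => (0 : ℝ) := by
    funext p; simp [Q]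
  rw [this]
  exact limsup_const 0

lemma limsup_map' {α β : Type*} (u : β → ℝ) (m : α → β) (l : Filter α) :
    limsup u (Filter.map m l) = limsup (u ∘ m) l := by
  rw [Filter.limsup, Filter.limsup, Filter.map_map]

lemma map_psi (c : ℝ) (hc : 0 < c) (y : X) :
    Filter.map (fun p : X × ℝ => (p.1, c * p.2)) (F y) = F y := by
  have heq := Filter.prod_map_map_eq (m₁ := @id X) (m₂ := fun t : ℝ => c * t)
    (f₁ := 𝓝 y) (f₂ := 𝓝[>] (0:ℝ))
  rw [Filter.map_id] at heq
  simp only [id_eq] at heq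
  rw [F, ← heq]
  congr 1
  have hh : Filter.map (fun t : ℝ => c * t) (𝓝[>] (0:ℝ)) =
      𝓝[(fun t : ℝ => c * t) '' (Set.Ioi 0)] ((fun t : ℝ => c * t) 0) := by
    have := (Homeomorph.mulLeft₀ c hc.ne').isEmbedding.map_nhdsWithin_eq (Set.Ioi (0:ℝ)) 0
    simpa [Homeomorph.coe_mulLeft₀] using this
  rw [hh]
  have himg : (fun t : ℝ => c * t) '' (Set.Ioi 0) = Set.Ioi 0 := by
    ext t
    constructor
    · rintro ⟨s, hs, rfl⟩; exact mul_pos hc hs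
    · intro ht; exact ⟨t / c, div_pos ht hc, by field_simp⟩
  rw [himg]
  norm_num

lemma clarkeDeriv_smul (hU : IsOpen U) (hf : LipschitzOnWith L f U) (hy : y ∈ U)
    {c : ℝ} (hc : 0 < c) (h : X) :
    clarkeDeriv f y (c • h) = c * clarkeDeriv f y h := by
  set v : X × ℝ → ℝ := fun p => Q f h (p.1, c * p.2) with hv
  have key : Q f (c • h) = fun p : X × ℝ => c * v p := by
    funext p
    simp only [Q, hv]
    rcases eq_or_ne p.2 0 with h2 | h2
    · simp [h2]
    · have : p.2 • c • h = (c * p.2) • h := by rw [smul_smul, mul_comm]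
      rw [this]
      field_simp
  have hcomp : limsup v (F y) = limsup (Q f h) (F y) := by
    have : v = (Q f h) ∘ (fun p : X × ℝ => (p.1, c * p.2)) := rfl
    rw [this, ← limsup_map', map_psi c hc]
  rw [clarkeDeriv_eq', clarkeDeriv_eq', key, ← hcomp]
  have hvb : ∀ᶠ p : X × ℝ in F y, |v p| ≤ L * ‖h‖ := by
    have hQ := Qbound hU hf hy h
    rw [← map_psi c hc y, eventually_map] at hQ
    exact hQ
  have h1 : IsBoundedUnder (· ≤ ·) (F y) v :=
    isBoundedUnder_of_eventually_le
      (by filter_upwards [hvb] with p hp using le_of_abs_le hp)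
  have h2 : IsCoboundedUnder (· ≤ ·) (F y) v :=
    isCoboundedUnder_le_of_eventually_le _
      (by filter_upwards [hvb] with p hp using neg_le_of_abs_le hp)
  have heqf : ∀ x : ℝ, (OrderIso.mulLeft₀ c hc) x = c * x := fun x => rfl
  have h3 : IsBoundedUnder (· ≤ ·) (F y) (fun p => (OrderIso.mulLeft₀ c hc) (v p)) := by
    refine isBoundedUnder_of_eventually_le (a := c * (L * ‖h‖)) ?_
    filter_upwards [hvb] with p hp
    rw [heqf]
    exact mul_le_mul_of_nonneg_left (le_of_abs_le hp) hc.le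
  have h4 : IsCoboundedUnder (· ≤ ·) (F y) (fun p => (OrderIso.mulLeft₀ c hc) (v p)) := by
    refine isCoboundedUnder_le_of_eventually_le _ (x := c * (-(L * ‖h‖))) ?_
    filter_upwards [hvb] with p hp
    rw [heqf]
    exact mul_le_mul_of_nonneg_left (neg_le_of_abs_le hp) hc.le
  have := (OrderIso.mulLeft₀ c hc).limsup_apply (u := v) (f := F y) h1 h2 h3 h4
  simp only [heqf] at this
  exact this.symm

lemma clarkeDeriv_add_le (hU : IsOpen U) (hf : LipschitzOnWith L f U) (hy : y ∈ U) (h k : X) :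
    clarkeDeriv f y (h + k) ≤ clarkeDeriv f y h + clarkeDeriv f y k := by
  set φ : X × ℝ → X × ℝ := fun p => (p.1 + p.2 • k, p.2) with hφdef
  have hφ : Filter.Tendsto φ (F y) (F y) := by
    rw [F, tendsto_prod_iff']
    constructor
    · have hc : Continuous (fun p : X × ℝ => p.1 + p.2 • k) := by continuity
      have h2 : Filter.Tendsto (fun p : X × ℝ => p.1 + p.2 • k) (𝓝 (y, (0:ℝ))) (𝓝 y) := by
        have := hc.continuousAt (x := (y, (0:ℝ)))
        unfold ContinuousAt at this
        simpa using this
      exact h2.mono_left (by rw [nhds_prod_eq]; exact Filter.prod_mono le_rfl nhdsWithin_le_nhds)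
    · exact tendsto_snd.mono_left (le_refl _)
  have key : Q f (h + k) = fun p : X × ℝ => Q f h (φ p) + Q f k p := by
    funext p
    have harg : p.1 + p.2 • (h + k) = p.1 + p.2 • k + p.2 • h := by
      rw [smul_add]; abel
    simp only [Q, hφdef]
    rw [← add_div, sub_add_sub_cancel, harg]
  rw [clarkeDeriv_eq', clarkeDeriv_eq', clarkeDeriv_eq', key]
  have hQhφ : ∀ᶠ p : X × ℝ in F y, |Q f h (φ p)| ≤ L * ‖h‖ :=
    hφ.eventually (Qbound hU hf hy h)
  have b1 : IsBoundedUnder (· ≥ ·) (F y) (fun p => Q f h (φ p)) :=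
    isBoundedUnder_of_eventually_ge
      (by filter_upwards [hQhφ] with p hp using neg_le_of_abs_le hp)
  have b2 : IsBoundedUnder (· ≤ ·) (F y) (fun p => Q f h (φ p)) :=
    isBoundedUnder_of_eventually_le
      (by filter_upwards [hQhφ] with p hp using le_of_abs_le hp)
  have b3 : IsCoboundedUnder (· ≤ ·) (F y) (Q f k) := isCobdd_le hU hf hy k
  have b4 : IsBoundedUnder (· ≤ ·) (F y) (Q f k) := isBdd_le hU hf hy k
  have step : limsup (fun p => Q f h (φ p) + Q f k p) (F y) ≤
      limsup (fun p => Q f h (φ p)) (F y) + limsup (Q f k) (F y) :=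
    limsup_add_le b1 b2 b3 b4
  refine step.trans (add_le_add_left ?_ _)
  have heq2 : limsup (fun p => Q f h (φ p)) (F y) = limsup (Q f h) (Filter.map φ (F y)) := by
    rw [limsup_map']; rfl
  rw [heq2]
  refine limsup_le_limsup_of_le hφ ?_ (isBdd_le hU hf hy h)
  refine IsBoundedUnder.isCoboundedUnder_le ?_
  rw [IsBoundedUnder, Filter.map_map]
  exact b1



lemma exists_clarkeGrad (hU : IsOpen U) (hf : LipschitzOnWith L f U) (hy : y ∈ U)
    {h' : X} (hne : h' ≠ 0) :
    ∃ g : StrongDual ℝ X, g ∈ clarkeGrad f y ∧ g h' = clarkeDeriv f y h' := by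
  set N : X → ℝ := fun h => clarkeDeriv f y h with hN
  have N_hom : ∀ c : ℝ, 0 < c → ∀ x, N (c • x) = c * N x :=
    fun c hc x => clarkeDeriv_smul hU hf hy hc x
  have N_add : ∀ x z : X, N (x + z) ≤ N x + N z := clarkeDeriv_add_le hU hf hy
  have hsum : ∀ x : X, 0 ≤ N x + N (-x) := by
    intro x
    have h0 : N (x + -x) = 0 := by
      rw [add_neg_cancel]; exact clarkeDeriv_zero f y
    have := N_add x (-x); linarith
  have hle : ∀ x : X, N x ≤ L * ‖x‖ := fun x => clarkeDeriv_le hU hf hy x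
  have Hsing : ∀ c : ℝ, c • h' = 0 → c • N h' = 0 := by
    intro c hc
    rcases smul_eq_zero.mp hc with rfl | h
    · simp
    · exact absurd h hne
  set pf := LinearPMap.mkSpanSingleton' (R := ℝ) (σ := RingHom.id ℝ) h' (N h') Hsing with hpf
  have hdom : ∀ x : pf.domain, pf x ≤ N x := by
    rintro ⟨x, hx⟩
    have hx' : x ∈ Submodule.span ℝ {h'} := by
      simpa [hpf, LinearPMap.domain_mkSpanSingleton] using hx
    obtain ⟨c, rfl⟩ := Submodule.mem_span_singleton.mp hx'
    have happ : pf ⟨c • h', hx⟩ = c • N h' := LinearPMap.mkSpanSingleton'_apply h' (N h') Hsing c _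
    rw [happ, smul_eq_mul]
    rcases lt_trichotomy c 0 with hc | rfl | hc
    · have hNeg : N (c • h') = (-c) * N (-h') := by
        have : c • h' = (-c) • (-h') := by simp
        rw [this, N_hom (-c) (by linarith) (-h')]
      rw [hNeg]
      have := hsum h'
      nlinarith
    · simp [clarkeDeriv_zero f y, hN]
    · rw [N_hom c hc h']
  obtain ⟨g, hg_eq, hg_le⟩ := exists_extension_of_le_sublinear pf N N_hom N_add hdom
  have hgbnd : ∀ x : X, ‖g x‖ ≤ (L : ℝ) * ‖x‖ := by
    intro x
    rw [Real.norm_eq_abs, abs_le]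
    constructor
    · have h1 : g (-x) ≤ N (-x) := hg_le (-x)
      have h2 : N (-x) ≤ L * ‖-x‖ := hle (-x)
      rw [norm_neg] at h2
      have : g (-x) = -g x := by rw [map_neg]
      linarith [this ▸ h1]
    · exact (hg_le x).trans (hle x)
  set G : StrongDual ℝ X := LinearMap.mkContinuous g (L : ℝ) hgbnd with hG
  have hGapp : ∀ x : X, G x = g x := fun x => rfl
  refine ⟨G, ?_, ?_⟩
  · intro h
    rw [hGapp]
    exact hg_le h
  · rw [hGapp]
    have hmem : h' ∈ pf.domain := by
      rw [LinearPMap.domain_mkSpanSingleton]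
      exact Submodule.mem_span_singleton_self h'
    have := hg_eq ⟨h', hmem⟩
    rw [this]
    exact LinearPMap.mkSpanSingleton'_apply_self h' (N h') Hsing _

lemma clarkeGrad_norm_le (hU : IsOpen U) (hf : LipschitzOnWith L f U) (hy : y ∈ U)
    {g : StrongDual ℝ X} (hg : g ∈ clarkeGrad f y) : ‖g‖ ≤ L := by
  refine ContinuousLinearMap.opNorm_le_bound _ L.coe_nonneg fun x => ?_
  rw [Real.norm_eq_abs, abs_le]
  constructor
  · have h1 : g (-x) ≤ clarkeDeriv f y (-x) := hg (-x)
    have h2 : clarkeDeriv f y (-x) ≤ L * ‖-x‖ := clarkeDeriv_le hU hf hy (-x)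
    rw [norm_neg] at h2
    rw [map_neg] at h1
    linarith
  · exact (hg x).trans (clarkeDeriv_le hU hf hy x)



lemma clarkeGrad_subset_setGrad (hy : y ∈ A) : clarkeGrad f y ⊆ setGrad f A := by
  intro g hg
  show StrongDual.toWeakDual g ∈ closure _
  exact subset_closure (mem_image_of_mem _ (subset_convexHull ℝ _ (mem_biUnion hy hg)))

lemma setGrad_convex (f : X → ℝ) (A : Set X) : Convex ℝ (setGrad f A) := by
  intro b1 hb1 b2 hb2 s t hs ht hst
  have hC : Convex ℝ (closure ((StrongDual.toWeakDual (𝕜 := ℝ) (E := X)) ''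
      (convexHull ℝ (⋃ y ∈ A, clarkeGrad f y)))) :=
    ((convex_convexHull ℝ _).linear_image
      (StrongDual.toWeakDual (𝕜 := ℝ) (E := X)).toLinearMap).closure
  have hmem := hC hb1 hb2 hs ht hst
  show StrongDual.toWeakDual (s • b1 + t • b2) ∈ _
  rw [map_add, map_smul, map_smul]
  exact hmem

lemma setGrad_norm_le (hU : IsOpen U) (hsub : A ⊆ U) (hf : LipschitzOnWith L f U)
    {b : StrongDual ℝ X} (hb : b ∈ setGrad f A) : ‖b‖ ≤ L := by
  set S := ⋃ y ∈ A, clarkeGrad f y with hS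
  have hSnorm : ∀ g ∈ S, ‖g‖ ≤ (L : ℝ) := by
    intro g hg
    rw [hS, mem_iUnion₂] at hg
    obtain ⟨y, hy, hgy⟩ := hg
    exact clarkeGrad_norm_le hU hf (hsub hy) hgy
  have hhull : convexHull ℝ S ⊆ closedBall 0 (L : ℝ) :=
    convexHull_min (fun g hg => mem_closedBall_zero_iff.2 (hSnorm g hg))
      (convex_closedBall 0 (L : ℝ))
  refine ContinuousLinearMap.opNorm_le_bound _ L.coe_nonneg fun x => ?_
  have hclosed : IsClosed {φ : WeakDual ℝ X | ‖φ x‖ ≤ (L : ℝ) * ‖x‖} :=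
    isClosed_le ((WeakDual.eval_continuous x).norm) continuous_const
  have himg : (StrongDual.toWeakDual (𝕜 := ℝ) (E := X)) '' (convexHull ℝ S) ⊆
      {φ : WeakDual ℝ X | ‖φ x‖ ≤ (L : ℝ) * ‖x‖} := by
    rintro _ ⟨g, hg, rfl⟩
    have h1 : ‖g‖ ≤ (L : ℝ) := by
      have := hhull hg
      rwa [mem_closedBall_zero_iff] at this
    have h2 : ‖g x‖ ≤ ‖g‖ * ‖x‖ := g.le_opNorm x
    exact h2.trans (mul_le_mul_of_nonneg_right h1 (norm_nonneg x))
  have := closure_minimal himg hclosed hb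
  exact this



end bounds

lemma geom [UniformConvexSpace X] {G : Set (StrongDual ℝ X)} (hconv : Convex ℝ G)
    {L r : ℝ} (hr : 0 < r) (hLr : r ≤ L) (hGnorm : ∀ b ∈ G, ‖b‖ ≤ L)
    (hGmin : ∀ b ∈ G, r ≤ ‖b‖) {δ : ℝ} (hδ0 : 0 < δ) (hδ1 : δ < 1) :
    ∃ τ > (0 : ℝ), ∀ a' ∈ G, ‖a'‖ ≤ r + τ → ∀ h' : X, ‖h'‖ = 1 → a' h' = -‖a'‖ →
      ∀ b ∈ G, b h' ≤ -((1 + δ) / 2 * r) := by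
  have hL : 0 < L := lt_of_lt_of_le hr hLr
  set K : ℝ := (1 - δ) * r / 4 with hK
  have hKpos : 0 < K := by rw [hK]; have : (0:ℝ) < 1 - δ := by linarith
                           positivity
  set εu : ℝ := K / L with hεu
  have hεupos : 0 < εu := div_pos hKpos hL
  obtain ⟨δu', hδu', hconv_u⟩ := exists_forall_closed_ball_dist_add_le_two_sub X hεupos
  set δu : ℝ := min δu' 1 with hδu
  have hδupos : 0 < δu := lt_min hδu' one_pos
  have hδule : δu ≤ 1 := min_le_right _ _
  have hδule' : δu ≤ δu' := min_le_left _ _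
  have hrδu : 0 < r * δu := mul_pos hr hδupos
  set t : ℝ := min (1 / 2) (r * δu / (4 * (L - r) + 4)) with ht
  have hden : (0:ℝ) < 4 * (L - r) + 4 := by linarith
  have htpos : 0 < t := lt_min one_half_pos (div_pos hrδu hden)
  have hthalf : t ≤ 1 / 2 := min_le_left _ _
  have htLr : t * (L - r) ≤ r * δu / 4 := by
    have h1 : t ≤ r * δu / (4 * (L - r) + 4) := min_le_right _ _
    have h1' : t * (4 * (L - r) + 4) ≤ r * δu := (le_div_iff₀ hden).mp h1
    nlinarith [htpos.le]
  set τ : ℝ := min (t * K / 2) (r * δu / 16) with hτ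
  have hτpos : 0 < τ := lt_min (by positivity) (by positivity)
  have hτ1 : τ ≤ t * K / 2 := min_le_left _ _
  have hτ2 : τ ≤ r * δu / 16 := min_le_right _ _
  refine ⟨τ, hτpos, ?_⟩
  intro a' ha'G ha'le h' hh' hah' b hbG
  have ha'r : r ≤ ‖a'‖ := hGmin a' ha'G
  have hbL : ‖b‖ ≤ L := hGnorm b hbG
  set c : StrongDual ℝ X := (1 - t) • a' + t • b with hc
  have hcG : c ∈ G := hconv ha'G hbG (by linarith) htpos.le (by ring)
  have hcr : r ≤ ‖c‖ := hGmin c hcG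
  obtain ⟨x0, hx01, hx02⟩ := c.exists_lt_apply_of_lt_opNorm
    (show ‖c‖ - τ < ‖c‖ by linarith)
  rw [Real.norm_eq_abs] at hx02
  obtain ⟨x, hx1, hx2⟩ : ∃ x : X, ‖x‖ ≤ 1 ∧ ‖c‖ - τ < c x := by
    rcases le_or_gt (c x0) 0 with hs | hs
    · refine ⟨-x0, (norm_neg x0).le.trans hx01.le, ?_⟩
      rw [abs_of_nonpos hs] at hx02
      rw [map_neg]; linarith
    · exact ⟨x0, hx01.le, by rwa [abs_of_pos hs] at hx02⟩
  have hcx : c x = (1 - t) * (a' x) + t * (b x) := by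
    rw [hc]; simp [ContinuousLinearMap.add_apply, ContinuousLinearMap.smul_apply, smul_eq_mul]
  have hbxL : b x ≤ L := by
    have h1 : |b x| ≤ ‖b‖ * ‖x‖ := by rw [← Real.norm_eq_abs]; exact b.le_opNorm x
    have h2 : ‖b‖ * ‖x‖ ≤ L * 1 := mul_le_mul hbL hx1 (norm_nonneg x) hL.le
    linarith [le_abs_self (b x)]
  have ha'xle : a' x ≤ ‖a'‖ := by
    have h1 : |a' x| ≤ ‖a'‖ * ‖x‖ := by rw [← Real.norm_eq_abs]; exact a'.le_opNorm x
    have h2 : ‖a'‖ * ‖x‖ ≤ ‖a'‖ * 1 := mul_le_mul_of_nonneg_left hx1 (norm_nonneg a')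
    linarith [le_abs_self (a' x)]
  -- lower bound for a' x
  have ha'x : r - (5 / 8) * (r * δu) ≤ a' x := by
    have hbt : t * (b x) ≤ t * L := mul_le_mul_of_nonneg_left hbxL htpos.le
    have h1 : r - τ - t * L < (1 - t) * (a' x) := by linarith [hx2, hcx, hcr]
    have e1 : (1 - t) * (a' x - r) = (1 - t) * (a' x) - r + t * r := by ring
    have h2 : -(τ + t * (L - r)) ≤ (1 - t) * (a' x - r) := by
      have e2 : -(τ + t * (L - r)) = -τ - t * L + t * r := by ring
      linarith
    have h3 : τ + t * (L - r) ≤ (5 / 16) * (r * δu) := by linarith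
    rcases le_or_gt r (a' x) with hcase | hcase
    · linarith
    · have h5 : (1 - t - 1 / 2) * (a' x - r) ≤ 0 :=
        mul_nonpos_of_nonneg_of_nonpos (by linarith) (by linarith)
      have e3 : (1 - t - 1 / 2) * (a' x - r) =
          (1 - t) * (a' x - r) - (1 / 2) * (a' x - r) := by ring
      -- (1/2)(a'x - r) ≥ (1-t)(a'x-r) ≥ -(5/16) r δu
      linarith
  -- x is close to -h'
  have hxh : ‖x + h'‖ < εu := by
    by_contra hcon
    push_neg at hcon
    have hd : εu ≤ ‖x - (-h')‖ := by rwa [sub_neg_eq_add]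
    have hnh : ‖(-h' : X)‖ ≤ 1 := by rw [norm_neg, hh']
    have hball := hconv_u hx1 hnh hd
    have hxmh : ‖x + -h'‖ ≤ 2 - δu := by linarith
    have heval : a' (x + -h') = a' x + ‖a'‖ := by
      rw [map_add, map_neg, hah']; ring
    have hble : a' (x + -h') ≤ ‖a'‖ * ‖x + -h'‖ := by
      have h1 : |a' (x + -h')| ≤ ‖a'‖ * ‖x + -h'‖ := by
        rw [← Real.norm_eq_abs]; exact a'.le_opNorm _
      linarith [le_abs_self (a' (x + -h'))]
    have hub : ‖a'‖ * ‖x + -h'‖ ≤ ‖a'‖ * (2 - δu) :=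
      mul_le_mul_of_nonneg_left hxmh (by linarith)
    have e4 : ‖a'‖ * (2 - δu) = 2 * ‖a'‖ - ‖a'‖ * δu := by ring
    have h8 : a' x ≤ ‖a'‖ - ‖a'‖ * δu := by linarith
    have h10 : r * δu ≤ ‖a'‖ * δu := mul_le_mul_of_nonneg_right ha'r hδupos.le
    -- a' x ≤ r + τ - r δu ≤ r + rδu/16 - rδu, contradiction with ha'x
    linarith
  -- lower bound for b x
  have hbx : r - K ≤ b x := by
    have h1 : (1 - t) * (a' x) ≤ (1 - t) * (r + τ) :=
      mul_le_mul_of_nonneg_left (by linarith) (by linarith)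
    have e5 : (1 - t) * (r + τ) = r + τ - t * r - t * τ := by ring
    have h2 : t * r - 2 * τ ≤ t * (b x) := by
      have := mul_nonneg htpos.le hτpos.le
      linarith [hx2, hcx, hcr]
    have h3 : t * (r - K) ≤ t * (b x) := by
      have e6 : t * (r - K) = t * r - t * K := by ring
      linarith
    exact le_of_mul_le_mul_left h3 htpos
  -- conclude
  have hfin : b (x + h') ≤ K := by
    have h1 : |b (x + h')| ≤ ‖b‖ * ‖x + h'‖ := by
      rw [← Real.norm_eq_abs]; exact b.le_opNorm _
    have h2 : ‖b‖ * ‖x + h'‖ ≤ L * εu :=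
      mul_le_mul hbL hxh.le (norm_nonneg _) hL.le
    have h3 : L * εu = K := by
      rw [hεu]; field_simp
    linarith [le_abs_self (b (x + h'))]
  have hsplit : b h' = b (x + h') - b x := by rw [map_add]; ring
  rw [hsplit]
  have he7 : (1 + δ) / 2 * r = r - 2 * K := by rw [hK]; ring
  rw [he7]
  linarith



end Aux

/-- Corollary 3.7 (approximation of an optimal descent direction). -/
theorem approximation_of_optimal_descent
    [CompleteSpace X] [StrictConvexSpace ℝ (StrongDual ℝ X)]
    (hX : UniformConvexSpace X ∨ (FiniteDimensional ℝ X ∧ StrictConvexSpace ℝ X))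
    (A : Set X) (hA : A.Nonempty) (f : X → ℝ)
    (hf : ∃ (L : ℝ≥0) (U : Set X), IsOpen U ∧ A ⊆ U ∧ LipschitzOnWith L f U)
    (h0 : (0 : StrongDual ℝ X) ∉ setGrad f A)
    (a : StrongDual ℝ X) (ha : a ∈ setGrad f A) (hmin : ∀ b ∈ setGrad f A, ‖a‖ ≤ ‖b‖) :
    ∀ δ : ℝ, δ ∈ Set.Ioo (0 : ℝ) 1 → ∃ τ > (0 : ℝ),
      ∀ a' ∈ setGrad f A, ‖a'‖ ≤ ‖a‖ + τ →
        (∃! h' : X, ‖h'‖ = 1 ∧ a' h' = -‖a'‖) ∧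
        ∀ h' : X, ‖h'‖ = 1 → a' h' = -‖a'‖ → setDeriv f A h' < -δ * ‖a‖ := by
  obtain ⟨L, U, hU, hAU, hf⟩ := hf
  haveI hUC : UniformConvexSpace X := by
    rcases hX with h | ⟨h1, h2⟩
    · exact h
    · exact Aux.uniformConvexSpace_of_finiteDimensional
  intro δ hδ
  obtain ⟨hδ0, hδ1⟩ := hδ
  have hane : a ≠ 0 := fun h => h0 (h ▸ ha)
  have hr : 0 < ‖a‖ := norm_pos_iff.mpr hane
  have hGnorm : ∀ b ∈ setGrad f A, ‖b‖ ≤ (L : ℝ) := fun b hb =>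
    Aux.setGrad_norm_le hU hAU hf hb
  have hLr : ‖a‖ ≤ (L : ℝ) := hGnorm a ha
  obtain ⟨τ, hτpos, hτ⟩ := Aux.geom (Aux.setGrad_convex f A) hr hLr hGnorm hmin hδ0 hδ1
  refine ⟨τ, hτpos, ?_⟩
  intro a' ha'G ha'le
  have ha'ne : a' ≠ 0 := by
    intro h
    have := hmin a' ha'G
    rw [h, norm_zero] at this
    linarith
  obtain ⟨h₀, hh₀, hah₀⟩ := Aux.exists_dual_attain a' ha'ne
  constructor
  · exact ⟨h₀, ⟨hh₀, hah₀⟩, fun y hy => Aux.dual_attain_unique ha'ne hy.1 hy.2 hh₀ hah₀⟩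
  · intro h' hh' hah'
    have hbound : ∀ b ∈ setGrad f A, b h' ≤ -((1 + δ) / 2 * ‖a‖) :=
      hτ a' ha'G ha'le h' hh' hah'
    have hne : h' ≠ 0 := by
      intro h
      rw [h, norm_zero] at hh'
      norm_num at hh'
    have hder : ∀ y ∈ A, clarkeDeriv f y h' ≤ -((1 + δ) / 2 * ‖a‖) := by
      intro y hy
      obtain ⟨g, hg, hgh⟩ := Aux.exists_clarkeGrad hU hf (hAU hy) hne
      have hgG : g ∈ setGrad f A := Aux.clarkeGrad_subset_setGrad hy hg
      rw [← hgh]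
      exact hbound g hgG
    have hsup : setDeriv f A h' ≤ -((1 + δ) / 2 * ‖a‖) := by
      rw [setDeriv]
      apply csSup_le (hA.image _)
      rintro _ ⟨y, hy, rfl⟩
      exact hder y hy
    have hlt : -((1 + δ) / 2 * ‖a‖) < -δ * ‖a‖ := by nlinarith
    linarith
end
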